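/- arXiv:2010.01566 — 8 statements merged into one kernel-verified Lean document; each statement's English description precedes it below -/
import Mathlib

section
/- Let f_0, f_T be smooth and T>0. If u is a C² solution on [0,T]×ℝ of u_tt = u_xx with u(0,x)=f_0(x) and u(T,x)=f_T(x), then the input v(x)=u_t(0,x) satisfies the recurrence v(x+T) = v(x−T) + 2 f_T'(x) − f_0'(x+T) − f_0'(x−T) for all x ∈ ℝ. -/
open Set

theorem stmt_1 (f0 fT : ℝ → ℝ) (T : ℝ) (hT : 0 < T)
    (hf0 : ContDiff ℝ (⊤ : ℕ∞) f0) (hfT : ContDiff ℝ (⊤ : ℕ∞) fT)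
    (u : ℝ → ℝ → ℝ)
    (hu : ContDiff ℝ 2 (fun p : ℝ × ℝ => u p.1 p.2))
    (hwave : ∀ t ∈ Set.Icc (0 : ℝ) T, ∀ x : ℝ,
      deriv (deriv (fun s => u s x)) t = deriv (deriv (fun y => u t y)) x)
    (h0 : ∀ x, u 0 x = f0 x) (hTc : ∀ x, u T x = fT x)
    (v : ℝ → ℝ) (hvdef : ∀ x, v x = deriv (fun t => u t x) 0) :
    ∀ x : ℝ, v (x + T) = v (x - T) + 2 * deriv fT x - deriv f0 (x + T) - deriv f0 (x - T) := by
  set U : ℝ × ℝ → ℝ := fun p => u p.1 p.2 with hU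
  set D : ℝ × ℝ → (ℝ × ℝ) →L[ℝ] ℝ := fderiv ℝ U with hD
  set D2 := fderiv ℝ D with hD2
  have hUdiff : Differentiable ℝ U := hu.differentiable two_ne_zero
  have hDC1 : ContDiff ℝ 1 D := hu.fderiv_right (le_refl _)
  have hDdiff : Differentiable ℝ D := hDC1.differentiable one_ne_zero
  -- slice derivatives
  have hpath1 : ∀ t x : ℝ, HasDerivAt (fun s : ℝ => ((s, x) : ℝ × ℝ)) (1, 0) t := by
    intro t x
    simpa using (hasDerivAt_id t).prodMk (hasDerivAt_const t x)
  have hpath2 : ∀ t x : ℝ, HasDerivAt (fun y : ℝ => ((t, y) : ℝ × ℝ)) (0, 1) x := by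
    intro t x
    simpa using (hasDerivAt_const x t).prodMk (hasDerivAt_id x)
  have hut : ∀ t x : ℝ, HasDerivAt (fun s => u s x) (D (t, x) (1, 0)) t := by
    intro t x
    exact (hUdiff (t, x)).hasFDerivAt.comp_hasDerivAt t (hpath1 t x)
  have hux : ∀ t x : ℝ, HasDerivAt (fun y => u t y) (D (t, x) (0, 1)) x := by
    intro t x
    exact (hUdiff (t, x)).hasFDerivAt.comp_hasDerivAt x (hpath2 t x)
  -- derivative of p ↦ D p w in direction e is D2 p e w
  have hDe : ∀ (w : ℝ × ℝ) (p : ℝ × ℝ), HasFDerivAt (fun q => D q w)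
      ((ContinuousLinearMap.apply ℝ ℝ w).comp (D2 p)) p := by
    intro w p
    exact (ContinuousLinearMap.apply ℝ ℝ w).hasFDerivAt.comp p (hDdiff p).hasFDerivAt
  -- second slice derivatives
  have h2t : ∀ t x : ℝ, deriv (deriv (fun s => u s x)) t = D2 (t, x) (1, 0) (1, 0) := by
    intro t x
    have : deriv (fun s => u s x) = fun s => D (s, x) (1, 0) := by
      funext s; exact (hut s x).deriv
    rw [this]
    exact (((hDe (1, 0) (t, x)).comp_hasDerivAt t (hpath1 t x))).deriv
  have h2x : ∀ t x : ℝ, deriv (deriv (fun y => u t y)) x = D2 (t, x) (0, 1) (0, 1) := by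
    intro t x
    have : deriv (fun y => u t y) = fun y => D (t, y) (0, 1) := by
      funext y; exact (hux t y).deriv
    rw [this]
    exact (((hDe (0, 1) (t, x)).comp_hasDerivAt x (hpath2 t x))).deriv
  have hsymm : ∀ p : ℝ × ℝ, ∀ a b : ℝ × ℝ, D2 p a b = D2 p b a := by
    intro p a b
    exact (hu.contDiffAt.isSymmSndFDerivAt minSmoothness_of_isRCLikeNormedField.le) a b
  have hwave' : ∀ t ∈ Set.Icc (0 : ℝ) T, ∀ x : ℝ,
      D2 (t, x) (1, 0) (1, 0) = D2 (t, x) (0, 1) (0, 1) := by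
    intro t ht x
    rw [← h2t, ← h2x]; exact hwave t ht x
  -- characteristic propagation lemmas
  have key : ∀ c : ℝ, ∀ ε : ℝ, ε = 1 ∨ ε = -1 →
      D (T, c + ε * T) (1, 0) - ε * D (T, c + ε * T) (0, 1)
        = D (0, c) (1, 0) - ε * D (0, c) (0, 1) := by
    intro c ε hε
    set g : ℝ → ℝ := fun t => D (t, c + ε * t) (1, 0) - ε * D (t, c + ε * t) (0, 1) with hg
    have hpath : ∀ t : ℝ, HasDerivAt (fun s : ℝ => ((s, c + ε * s) : ℝ × ℝ)) (1, ε) t := by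
      intro t
      have : HasDerivAt (fun s : ℝ => c + ε * s) ε t := by
        simpa using ((hasDerivAt_id t).const_mul ε).const_add c
      simpa using (hasDerivAt_id t).prodMk this
    have hg' : ∀ t : ℝ, HasDerivAt g
        (D2 (t, c + ε * t) (1, ε) (1, 0) - ε * D2 (t, c + ε * t) (1, ε) (0, 1)) t := by
      intro t
      have h1 : HasDerivAt (fun s => D (s, c + ε * s) (1, 0))
          (D2 (t, c + ε * t) (1, ε) (1, 0)) t := by
        have := (hDe (1, 0) (t, c + ε * t)).comp_hasDerivAt t (hpath t)
        exact this
      have h2 : HasDerivAt (fun s => D (s, c + ε * s) (0, 1))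
          (D2 (t, c + ε * t) (1, ε) (0, 1)) t := by
        have := (hDe (0, 1) (t, c + ε * t)).comp_hasDerivAt t (hpath t)
        exact this
      exact h1.sub (h2.const_mul ε)
    have hzero : ∀ t ∈ Icc (0 : ℝ) T,
        D2 (t, c + ε * t) (1, ε) (1, 0) - ε * D2 (t, c + ε * t) (1, ε) (0, 1) = 0 := by
      intro t ht
      have hlin : (D2 (t, c + ε * t)) (1, ε) = D2 (t, c + ε * t) (1, 0) + ε • D2 (t, c + ε * t) (0, 1) := by
        have : ((1 : ℝ), ε) = (1, 0) + ε • ((0 : ℝ), (1 : ℝ)) := by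
          simp [Prod.ext_iff]
        rw [this, map_add, map_smul]
      rw [hlin]
      simp only [ContinuousLinearMap.add_apply, ContinuousLinearMap.coe_smul',
        Pi.smul_apply, smul_eq_mul]
      have hw := hwave' t ht (c + ε * t)
      have hs1 := hsymm (t, c + ε * t) (0, 1) (1, 0)
      rcases hε with h | h <;> subst h <;> linarith [hw, hs1]
    have hconst : g T = g 0 := by
      have := constant_of_has_deriv_right_zero (f := g) (a := 0) (b := T)
        (fun t _ => (hg' t).continuousAt.continuousWithinAt)
        (fun t ht => by
          have h0 := hzero t ⟨ht.1, ht.2.le⟩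
          simpa [h0] using ((hg' t).hasDerivWithinAt (s := Ici t)))
      exact this T ⟨hT.le, le_rfl⟩
    simpa [hg] using hconst
  -- boundary derivatives
  have hux0 : ∀ y : ℝ, D (0, y) (0, 1) = deriv f0 y := by
    intro y
    have : (fun z => u 0 z) = f0 := funext h0
    rw [← (hux 0 y).deriv, this]
  have huxT : ∀ y : ℝ, D (T, y) (0, 1) = deriv fT y := by
    intro y
    have : (fun z => u T z) = fT := funext hTc
    rw [← (hux T y).deriv, this]
  have hv : ∀ y : ℝ, v y = D (0, y) (1, 0) := by
    intro y; rw [hvdef y, (hut 0 y).deriv]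
  intro x
  have k1 := key (x + T) (-1) (Or.inr rfl)
  have k2 := key (x - T) 1 (Or.inl rfl)
  have e1 : x + T + (-1) * T = x := by ring
  have e2 : x - T + 1 * T = x := by ring
  rw [e1] at k1; rw [e2] at k2
  linarith [k1, k2, hv (x + T), hv (x - T), hux0 (x + T), hux0 (x - T), huxT x]
end

section
/- Let f_0, f_T be smooth, T>0, and let v ∈ C¹[−T,T] satisfy (i) ∫_{−T}^{T} v(x) dx = 2 f_T(0) − f_0(T) − f_0(−T), (ii) v(T) = v(−T) + 2 f_T'(0) − f_0'(T) − f_0'(−T), and (iii) v'(T) = v'(−T) + 2 f_T''(0) − f_0''(T) − f_0''(−T). Extend v to ℝ by the recurrence v(x+T) = v(x−T) + 2 f_T'(x) − f_0'(x+T) − f_0'(x−T). Then the extended v is C¹ on ℝ, and u(t,x) = (f_0(x+t)+f_0(x−t))/2 + (1/2)∫_{x−t}^{x+t} v(s) ds is a C² function solving u_tt = u_xx with u(0,x)=f_0(x) and u(T,x)=f_T(x) for all x ∈ ℝ. -/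
open Set

-- glue lemma
theorem glueC1 {f : ℝ → ℝ} {a b c : ℝ} (hab : a < b) (hbc : b < c)
    (h1 : ContDiffOn ℝ 1 f (Icc a b)) (h2 : ContDiffOn ℝ 1 f (Icc b c))
    (hd : derivWithin f (Icc a b) b = derivWithin f (Icc b c) b) :
    ContDiffOn ℝ 1 f (Icc a c) := by
  have hac : a < c := hab.trans hbc
  have U1 := uniqueDiffOn_Icc hab
  have U2 := uniqueDiffOn_Icc hbc
  have U := uniqueDiffOn_Icc hac
  have hun : Icc a b ∪ Icc b c = Icc a c := Icc_union_Icc_eq_Icc hab.le hbc.le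
  set w : ℝ → ℝ := fun y => if y ≤ b then derivWithin f (Icc a b) y else derivWithin f (Icc b c) y with hw
  have D1 : DifferentiableOn ℝ f (Icc a b) := h1.differentiableOn one_ne_zero
  have D2 : DifferentiableOn ℝ f (Icc b c) := h2.differentiableOn one_ne_zero
  have mem1 : ∀ y ∈ Icc a c, y < b → Icc a b ∈ nhdsWithin y (Icc a c) := by
    intro y hy hyb
    rw [mem_nhdsWithin]
    exact ⟨Iio b, isOpen_Iio, hyb, fun z hz => ⟨hz.2.1, le_of_lt hz.1⟩⟩
  have mem2 : ∀ y ∈ Icc a c, b < y → Icc b c ∈ nhdsWithin y (Icc a c) := by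
    intro y hy hyb
    rw [mem_nhdsWithin]
    exact ⟨Ioi b, isOpen_Ioi, hyb, fun z hz => ⟨le_of_lt hz.1, hz.2.2⟩⟩
  have key : ∀ y ∈ Icc a c, HasDerivWithinAt f (w y) (Icc a c) y := by
    intro y hy
    rcases lt_trichotomy y b with h | h | h
    · have : w y = derivWithin f (Icc a b) y := if_pos h.le
      rw [this]
      have hy1 : y ∈ Icc a b := ⟨hy.1, h.le⟩
      exact ((D1 y hy1).hasDerivWithinAt).mono_of_mem_nhdsWithin (mem1 y hy h)
    · subst h
      have : w y = derivWithin f (Icc a y) y := if_pos le_rfl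
      rw [this]
      have hb1 : y ∈ Icc a y := ⟨hab.le, le_rfl⟩
      have hb2 : y ∈ Icc y c := ⟨le_rfl, hbc.le⟩
      have A : HasDerivWithinAt f (derivWithin f (Icc a y) y) (Icc a y) y :=
        (D1 y hb1).hasDerivWithinAt
      have B : HasDerivWithinAt f (derivWithin f (Icc a y) y) (Icc y c) y := by
        rw [hd]; exact (D2 y hb2).hasDerivWithinAt
      have := A.union B
      rwa [hun] at this
    · have : w y = derivWithin f (Icc b c) y := if_neg (not_le.mpr h)
      rw [this]
      have hy2 : y ∈ Icc b c := ⟨h.le, hy.2⟩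
      exact ((D2 y hy2).hasDerivWithinAt).mono_of_mem_nhdsWithin (mem2 y hy h)
  have hD : DifferentiableOn ℝ f (Icc a c) := fun y hy => (key y hy).differentiableWithinAt
  have hdw : ∀ y ∈ Icc a c, derivWithin f (Icc a c) y = w y := fun y hy =>
    (key y hy).derivWithin (U y hy)
  -- continuity of w on the pieces
  have h1' := h1
  have h2' := h2
  rw [show (1 : WithTop ℕ∞) = 0 + 1 from rfl, contDiffOn_succ_iff_derivWithin U1] at h1'
  rw [show (1 : WithTop ℕ∞) = 0 + 1 from rfl, contDiffOn_succ_iff_derivWithin U2] at h2'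
  have hc1 : ContinuousOn (derivWithin f (Icc a b)) (Icc a b) := h1'.2.2.continuousOn
  have hc2 : ContinuousOn (derivWithin f (Icc b c)) (Icc b c) := h2'.2.2.continuousOn
  have hw1 : ∀ y ∈ Icc a b, w y = derivWithin f (Icc a b) y := fun y hy => if_pos hy.2
  have hw2 : ∀ y ∈ Icc b c, w y = derivWithin f (Icc b c) y := by
    intro y hy
    rcases eq_or_lt_of_le hy.1 with h | h
    · subst h; exact (if_pos le_rfl).trans hd
    · exact if_neg (not_le.mpr h)
  have hcw1 : ContinuousOn w (Icc a b) := hc1.congr hw1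
  have hcw2 : ContinuousOn w (Icc b c) := hc2.congr hw2
  have hcw : ContinuousOn w (Icc a c) := by
    intro y hy
    rcases lt_trichotomy y b with h | h | h
    · refine ((hcw1 y ⟨hy.1, h.le⟩).mono_of_mem_nhdsWithin (mem1 y hy h))
    · subst h
      have := (hcw1 y ⟨hab.le, le_rfl⟩).union (hcw2 y ⟨le_rfl, hbc.le⟩)
      rwa [hun] at this
    · refine ((hcw2 y ⟨h.le, hy.2⟩).mono_of_mem_nhdsWithin (mem2 y hy h))
  rw [show (1 : WithTop ℕ∞) = 0 + 1 from rfl, contDiffOn_succ_iff_derivWithin U]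
  refine ⟨hD, by simp, ?_⟩
  exact_mod_cast contDiffOn_zero.mpr (hcw.congr hdw)


theorem shiftC1 {v g : ℝ → ℝ} {a b : ℝ} (hab : a < b)
    (hC : ContDiffOn ℝ 1 v (Icc a b)) (hg : ContDiff ℝ 1 g) (e : ℝ)
    (heq : ∀ y, v y = v (y + e) + g y) :
    ContDiffOn ℝ 1 v (Icc (a - e) (b - e)) ∧
      ∀ y ∈ Icc (a - e) (b - e),
        derivWithin v (Icc (a - e) (b - e)) y
          = derivWithin v (Icc a b) (y + e) + deriv g y := by
  have hab' : a - e < b - e := by linarith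
  have hmaps : MapsTo (fun y => y + e) (Icc (a - e) (b - e)) (Icc a b) := by
    intro y hy
    simp only [mem_Icc] at hy ⊢
    constructor <;> linarith
  have hinner : ContDiffOn ℝ 1 (fun y : ℝ => y + e) (Icc (a - e) (b - e)) :=
    ((contDiff_id.add contDiff_const) : ContDiff ℝ 1 (fun y : ℝ => y + e)).contDiffOn
  have hcomp : ContDiffOn ℝ 1 (v ∘ fun y => y + e) (Icc (a - e) (b - e)) :=
    hC.comp hinner hmaps
  have hEq : EqOn v ((v ∘ fun y => y + e) + g) (Icc (a - e) (b - e)) := by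
    intro y _; simpa using heq y
  have hCD : ContDiffOn ℝ 1 v (Icc (a - e) (b - e)) :=
    (hcomp.add (hg.contDiffOn)).congr hEq
  refine ⟨hCD, ?_⟩
  intro y hy
  have hU := uniqueDiffOn_Icc hab'
  have hdv : HasDerivWithinAt v (derivWithin v (Icc a b) (y + e)) (Icc a b) (y + e) :=
    ((hC.differentiableOn one_ne_zero) (y + e) (hmaps hy)).hasDerivWithinAt
  have hid : HasDerivWithinAt (fun y : ℝ => y + e) 1 (Icc (a - e) (b - e)) y :=
    ((hasDerivAt_id y).add_const e).hasDerivWithinAt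
  have hcompd : HasDerivWithinAt (v ∘ fun y => y + e)
      (derivWithin v (Icc a b) (y + e)) (Icc (a - e) (b - e)) y := by
    have := HasDerivWithinAt.comp y hdv hid hmaps
    simpa using this
  have hgd : HasDerivWithinAt g (deriv g y) (Icc (a - e) (b - e)) y :=
    ((hg.differentiable one_ne_zero) y).hasDerivAt.hasDerivWithinAt
  have hsum := hcompd.add hgd
  have hv : HasDerivWithinAt v (derivWithin v (Icc a b) (y + e) + deriv g y)
      (Icc (a - e) (b - e)) y := by
    refine hsum.congr ?_ ?_
    · intro z hz; simpa using heq z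
    · simpa using heq y
  exact hv.derivWithin (hU y hy)

theorem part1 (f0 fT v : ℝ → ℝ) (T : ℝ) (hT : 0 < T)
    (hf0 : ContDiff ℝ (⊤ : ℕ∞) f0) (hfT : ContDiff ℝ (⊤ : ℕ∞) fT)
    (hvC1 : ContDiffOn ℝ 1 v (Set.Icc (-T) T))
    (hend' : derivWithin v (Set.Icc (-T) T) T
      = derivWithin v (Set.Icc (-T) T) (-T)
        + 2 * deriv (deriv fT) 0 - deriv (deriv f0) T - deriv (deriv f0) (-T))
    (hrec : ∀ x : ℝ,
      v (x + T) = v (x - T) + 2 * deriv fT x - deriv f0 (x + T) - deriv f0 (x - T)) :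
    ContDiff ℝ 1 v := by
  set d : ℝ → ℝ := deriv f0 with hd_def
  set e : ℝ → ℝ := deriv fT with he_def
  have hd2 : ContDiff ℝ 2 d := by
    have h3 : ContDiff ℝ ((2:ℕ) + 1) f0 := hf0.of_le (WithTop.coe_le_coe.mpr le_top)
    exact (contDiff_succ_iff_deriv.mp h3).2.2
  have he2 : ContDiff ℝ 2 e := by
    have h3 : ContDiff ℝ ((2:ℕ) + 1) fT := hfT.of_le (WithTop.coe_le_coe.mpr le_top)
    exact (contDiff_succ_iff_deriv.mp h3).2.2
  have hd1 : ContDiff ℝ 1 d := hd2.of_le (by norm_num)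
  have he1 : ContDiff ℝ 1 e := he2.of_le (by norm_num)
  have hdd1 : ContDiff ℝ 1 (deriv d) := by
    have := (contDiff_succ_iff_deriv.mp (show ContDiff ℝ ((1:ℕ)+1) d from hd2)).2.2
    exact this
  have hed1 : ContDiff ℝ 1 (deriv e) := by
    have := (contDiff_succ_iff_deriv.mp (show ContDiff ℝ ((1:ℕ)+1) e from he2)).2.2
    exact this
  set h : ℝ → ℝ := fun y => 2 * e (y - T) - d y - d (y - 2*T) with hh_def
  have hh1 : ContDiff ℝ 1 h := by fun_prop
  -- recurrence in shifted form
  have hrec2 : ∀ y : ℝ, v y = v (y - 2*T) + h y := by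
    intro y
    have := hrec (y - T)
    have e1 : y - T + T = y := by ring
    have e2 : y - T - T = y - 2*T := by ring
    rw [e1, e2] at this
    rw [this, hh_def]; ring
  have hrecF : ∀ y : ℝ, v y = v (y + -(2*T)) + h y := by
    intro y
    have e1 : y + -(2*T) = y - 2*T := by ring
    rw [e1]; exact hrec2 y
  have hrecB : ∀ y : ℝ, v y = v (y + 2*T) + (fun z => -(h (z + 2*T))) y := by
    intro y
    have := hrec2 (y + 2*T)
    have e1 : y + 2*T - 2*T = y := by ring
    rw [e1] at this
    simp only
    linarith [this]
  have hgB : ContDiff ℝ 1 (fun z : ℝ => -(h (z + 2*T))) := by fun_prop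
  -- interval endpoints
  set A : ℤ → ℝ := fun k => (2*(k:ℝ)-1)*T with hA_def
  have hAsucc : ∀ k : ℤ, A (k+1) = A k + 2*T := by
    intro k; simp only [hA_def]; push_cast; ring
  have hAlt : ∀ k : ℤ, A k < A (k+1) := by
    intro k; rw [hAsucc]; linarith
  have hA0 : A 0 = -T := by norm_num [hA_def]
  have hA1 : A 1 = T := by norm_num [hA_def]
  -- C¹ on each piece
  have hP : ∀ k : ℤ, ContDiffOn ℝ 1 v (Icc (A k) (A (k+1))) := by
    intro k
    induction k using Int.induction_on with
    | zero =>
        rw [show ((0:ℤ)+1) = 1 by norm_num, hA0, hA1]; exact hvC1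
    | succ k ih =>
        have := (shiftC1 (hAlt k) ih hh1 (-(2*T)) hrecF).1
        have e1 : A k - -(2*T) = A (k+1) := by rw [hAsucc]; ring
        have e2 : A (k+1) - -(2*T) = A (k+1+1) := by rw [hAsucc (k+1)]; ring
        rwa [e1, e2] at this
    | pred k ih =>
        have := (shiftC1 (hAlt (-(k:ℤ))) ih hgB (2*T) hrecB).1
        have e1 : A (-(k:ℤ)) - 2*T = A (-(k:ℤ)-1) := by
          have h2 := hAsucc (-(k:ℤ)-1)
          rw [show (-(k:ℤ)-1+1) = -(k:ℤ) by ring] at h2; linarith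
        have e2 : A (-(k:ℤ)+1) - 2*T = A (-(k:ℤ)-1+1) := by
          rw [show (-(k:ℤ)-1+1) = -(k:ℤ) by ring]
          have h2 := hAsucc (-(k:ℤ)); linarith
        rwa [e1, e2] at this
  -- forward derivWithin transfer formula
  have hF : ∀ k : ℤ, ∀ y ∈ Icc (A (k+1)) (A (k+1+1)),
      derivWithin v (Icc (A (k+1)) (A (k+1+1))) y
        = derivWithin v (Icc (A k) (A (k+1))) (y - 2*T) + deriv h y := by
    intro k y hy
    have hs := (shiftC1 (hAlt k) (hP k) hh1 (-(2*T)) hrecF).2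
    have e1 : A k - -(2*T) = A (k+1) := by rw [hAsucc]; ring
    have e2 : A (k+1) - -(2*T) = A (k+1+1) := by rw [hAsucc (k+1)]; ring
    rw [e1, e2] at hs
    have hs2 := hs y hy
    rwa [show y + -(2*T) = y - 2*T by ring] at hs2
  -- pointwise derivative of h
  have hh' : ∀ y : ℝ, deriv h y
      = 2 * deriv e (y - T) - deriv d y - deriv d (y - 2*T) := by
    intro y
    have h1 : HasDerivAt (fun z : ℝ => e (z - T)) (deriv e (y - T)) y := by
      have hb : HasDerivAt e (deriv e (y - T)) (y - T) :=
        ((he1.differentiable one_ne_zero) (y - T)).hasDerivAt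
      have := hb.comp y ((hasDerivAt_id y).sub_const T)
      simpa [Function.comp_def] using this
    have h3 : HasDerivAt (fun z : ℝ => d (z - 2*T)) (deriv d (y - 2*T)) y := by
      have hb : HasDerivAt d (deriv d (y - 2*T)) (y - 2*T) :=
        ((hd1.differentiable one_ne_zero) (y - 2*T)).hasDerivAt
      have := hb.comp y ((hasDerivAt_id y).sub_const (2*T))
      simpa [Function.comp_def] using this
    have h2 : HasDerivAt d (deriv d y) y := ((hd1.differentiable one_ne_zero) y).hasDerivAt
    exact (((h1.const_mul 2).sub h2).sub h3).deriv
  -- matching at junctions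
  have hM : ∀ k : ℤ, derivWithin v (Icc (A k) (A (k+1))) (A (k+1))
      = derivWithin v (Icc (A (k+1)) (A (k+1+1))) (A (k+1)) := by
    have step : ∀ k : ℤ,
        (derivWithin v (Icc (A k) (A (k+1))) (A (k+1))
          = derivWithin v (Icc (A (k+1)) (A (k+1+1))) (A (k+1))) ↔
        (derivWithin v (Icc (A (k+1)) (A (k+1+1))) (A (k+1+1))
          = derivWithin v (Icc (A (k+1+1)) (A (k+1+1+1))) (A (k+1+1))) := by
      intro k
      have hA2 : A (k+1+1) - 2*T = A (k+1) := by have := hAsucc (k+1); linarith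
      have hL := hF k (A (k+1+1)) ⟨(hAlt (k+1)).le, le_rfl⟩
      rw [hA2] at hL
      have hR := hF (k+1) (A (k+1+1)) ⟨le_rfl, (hAlt (k+1+1)).le⟩
      rw [show A (k+1+1) - 2*T = A (k+1) from hA2] at hR
      constructor
      · intro m; rw [hL, hR, m]
      · intro m; rw [hL, hR] at m; exact add_right_cancel m
    intro k
    induction k using Int.induction_on with
    | zero =>
        have i1 : ((0:ℤ)+1) = 1 := zero_add 1
        have i2 : ((0:ℤ)+1+1) = 2 := by norm_num
        have i3 : ((1:ℤ)+1) = 2 := by norm_num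
        rw [i1, i3]
        have hA2' : A 1 ≤ A 2 := by
          have := hAlt 1; rw [i3] at this; exact this.le
        have hB := hF 0 (A 1) (by rw [i1, i3]; exact ⟨le_rfl, hA2'⟩)
        rw [i1, i3] at hB
        rw [hA1, hA0] at hB ⊢
        rw [show T - 2*T = -T by ring] at hB
        have eh : deriv h T = 2 * deriv e 0 - deriv d T - deriv d (-T) := by
          rw [hh', show T - T = (0:ℝ) by ring, show T - 2*T = -T by ring]
        rw [hB, eh]
        linarith [hend']
    | succ k ih => exact (step k).mp ih
    | pred k ih =>
        apply (step (-(k:ℤ)-1)).mpr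
        simp only [show (-(k:ℤ)-1+1) = -(k:ℤ) from by ring]
        exact ih
  -- glue pairs
  have hQ : ∀ k : ℤ, ContDiffOn ℝ 1 v (Icc (A k) (A (k+1+1))) := fun k =>
    glueC1 (hAlt k) (hAlt (k+1)) (hP k) (hP (k+1)) (hM k)
  -- conclude
  rw [contDiff_iff_contDiffAt]
  intro x
  have hT2 : (0:ℝ) < 2*T := by linarith
  set k0 : ℤ := ⌊(x+T)/(2*T)⌋ with hk0
  have h1 : (k0:ℝ) * (2*T) ≤ x + T := by
    have := Int.floor_le ((x+T)/(2*T))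
    calc (k0:ℝ) * (2*T) ≤ ((x+T)/(2*T)) * (2*T) := by
          apply mul_le_mul_of_nonneg_right this hT2.le
      _ = x + T := by field_simp
  have h2 : x + T < ((k0:ℝ)+1) * (2*T) := by
    have := Int.lt_floor_add_one ((x+T)/(2*T))
    calc x + T = ((x+T)/(2*T)) * (2*T) := by field_simp
      _ < ((k0:ℝ)+1) * (2*T) := by
          apply mul_lt_mul_of_pos_right this hT2
  have hAk0 : A k0 = (2*(k0:ℝ)-1)*T := rfl
  have hAk1 : A (k0+1) = (2*(k0:ℝ)+1)*T := by
    simp only [hA_def]; push_cast; ring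
  have hxlt : x < A (k0+1) := by rw [hAk1]; linarith
  have hxge : A k0 ≤ x := by rw [hAk0]; linarith
  rcases lt_or_eq_of_le hxge with hlt | heq
  · have hxlt2 : x < A (k0+1+1) := hxlt.trans (hAlt (k0+1))
    exact (hQ k0).contDiffAt (Icc_mem_nhds hlt hxlt2)
  · have hlt1 : A (k0-1) < x := by
      rw [← heq]
      have := hAlt (k0-1)
      rwa [show (k0-1+1) = k0 from by ring] at this
    have hlt2 : x < A (k0-1+1+1) := by
      rw [show (k0-1+1+1) = k0+1 from by ring]
      exact hxlt
    exact (hQ (k0-1)).contDiffAt (Icc_mem_nhds hlt1 hlt2)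


theorem parts25 (f0 fT v : ℝ → ℝ) (T : ℝ) (hT : 0 < T)
    (hf0 : ContDiff ℝ (⊤ : ℕ∞) f0) (hfT : ContDiff ℝ (⊤ : ℕ∞) fT)
    (hv1 : ContDiff ℝ 1 v)
    (hint : ∫ x in (-T)..T, v x = 2 * fT 0 - f0 T - f0 (-T))
    (hrec : ∀ x : ℝ,
      v (x + T) = v (x - T) + 2 * deriv fT x - deriv f0 (x + T) - deriv f0 (x - T)) :
    (ContDiff ℝ 2 (fun p : ℝ × ℝ =>
        (f0 (p.2 + p.1) + f0 (p.2 - p.1)) / 2 + (1 / 2) * ∫ s in (p.2 - p.1)..(p.2 + p.1), v s)) ∧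
    (∀ t x : ℝ,
      deriv (deriv (fun τ : ℝ =>
        (f0 (x + τ) + f0 (x - τ)) / 2 + (1 / 2) * ∫ s in (x - τ)..(x + τ), v s)) t
      = deriv (deriv (fun y : ℝ =>
        (f0 (y + t) + f0 (y - t)) / 2 + (1 / 2) * ∫ s in (y - t)..(y + t), v s)) x) ∧
    (∀ x : ℝ,
      (f0 (x + 0) + f0 (x - 0)) / 2 + (1 / 2) * (∫ s in (x - 0)..(x + 0), v s) = f0 x) ∧
    (∀ x : ℝ,
      (f0 (x + T) + f0 (x - T)) / 2 + (1 / 2) * (∫ s in (x - T)..(x + T), v s) = fT x) := by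
  have hvc : Continuous v := hv1.continuous
  set V : ℝ → ℝ := fun y => ∫ s in (0:ℝ)..y, v s with hV_def
  have hV : ∀ y, HasDerivAt V (v y) y := by
    intro y
    exact intervalIntegral.integral_hasDerivAt_right (hvc.intervalIntegrable 0 y)
      hvc.aestronglyMeasurable.stronglyMeasurableAtFilter hvc.continuousAt
  have hVd : deriv V = v := funext fun y => (hV y).deriv
  have hV2 : ContDiff ℝ 2 V := by
    have h2 : ContDiff ℝ ((1:ℕ)+1) V := by
      refine contDiff_succ_iff_deriv.mpr ⟨fun y => (hV y).differentiableAt, by simp, ?_⟩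
      rw [hVd]; exact hv1
    exact h2
  have hsplit : ∀ a b : ℝ, ∫ s in a..b, v s = V b - V a := by
    intro a b
    exact (intervalIntegral.integral_interval_sub_left
      (hvc.intervalIntegrable 0 b) (hvc.intervalIntegrable 0 a)).symm
  set G : ℝ → ℝ := fun y => (f0 y + V y) / 2 with hG_def
  set H : ℝ → ℝ := fun y => (f0 y - V y) / 2 with hH_def
  have hG2 : ContDiff ℝ 2 G := ((hf0.of_le (WithTop.coe_le_coe.mpr le_top)).add hV2).div_const 2
  have hH2 : ContDiff ℝ 2 H := ((hf0.of_le (WithTop.coe_le_coe.mpr le_top)).sub hV2).div_const 2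
  have key : ∀ t x : ℝ,
      (f0 (x + t) + f0 (x - t)) / 2 + (1 / 2) * ∫ s in (x - t)..(x + t), v s
        = G (x + t) + H (x - t) := by
    intro t x
    rw [hsplit, hG_def, hH_def]; ring
  have hGd : Differentiable ℝ G := hG2.differentiable (by norm_num)
  have hHd : Differentiable ℝ H := hH2.differentiable (by norm_num)
  have hG'1 : ContDiff ℝ 1 (deriv G) := by
    exact (contDiff_succ_iff_deriv.mp (show ContDiff ℝ ((1:ℕ)+1) G from hG2)).2.2
  have hH'1 : ContDiff ℝ 1 (deriv H) := by
    exact (contDiff_succ_iff_deriv.mp (show ContDiff ℝ ((1:ℕ)+1) H from hH2)).2.2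
  have hG'd : Differentiable ℝ (deriv G) := hG'1.differentiable one_ne_zero
  have hH'd : Differentiable ℝ (deriv H) := hH'1.differentiable one_ne_zero
  refine ⟨?_, ?_, ?_, ?_⟩
  · -- joint C²
    have hfun : (fun p : ℝ × ℝ =>
        (f0 (p.2 + p.1) + f0 (p.2 - p.1)) / 2 + (1 / 2) * ∫ s in (p.2 - p.1)..(p.2 + p.1), v s)
        = fun p : ℝ × ℝ => G (p.2 + p.1) + H (p.2 - p.1) :=
      funext fun p => key p.1 p.2
    rw [hfun]
    exact (hG2.comp (contDiff_snd.add contDiff_fst)).add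
      (hH2.comp (contDiff_snd.sub contDiff_fst))
  · -- wave equation
    intro t x
    have hfunT : (fun τ : ℝ =>
        (f0 (x + τ) + f0 (x - τ)) / 2 + (1 / 2) * ∫ s in (x - τ)..(x + τ), v s)
        = fun τ => G (x + τ) + H (x - τ) := funext fun τ => key τ x
    have hfunX : (fun y : ℝ =>
        (f0 (y + t) + f0 (y - t)) / 2 + (1 / 2) * ∫ s in (y - t)..(y + t), v s)
        = fun y => G (y + t) + H (y - t) := funext fun y => key t y
    have dGp : ∀ (c τ : ℝ), HasDerivAt (fun τ => G (c + τ)) (deriv G (c + τ)) τ := by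
      intro c τ
      have := ((hGd (c + τ)).hasDerivAt).comp τ ((hasDerivAt_id τ).const_add c)
      simpa [Function.comp_def] using this
    have dHm : ∀ (c τ : ℝ), HasDerivAt (fun τ => H (c - τ)) (-(deriv H (c - τ))) τ := by
      intro c τ
      have := ((hHd (c - τ)).hasDerivAt).comp τ ((hasDerivAt_id τ).const_sub c)
      simpa [Function.comp_def] using this
    have dG'p : ∀ (c τ : ℝ), HasDerivAt (fun τ => deriv G (c + τ)) (deriv (deriv G) (c + τ)) τ := by
      intro c τ
      have := ((hG'd (c + τ)).hasDerivAt).comp τ ((hasDerivAt_id τ).const_add c)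
      simpa [Function.comp_def] using this
    have dH'm : ∀ (c τ : ℝ), HasDerivAt (fun τ => deriv H (c - τ)) (-(deriv (deriv H) (c - τ))) τ := by
      intro c τ
      have := ((hH'd (c - τ)).hasDerivAt).comp τ ((hasDerivAt_id τ).const_sub c)
      simpa [Function.comp_def] using this
    have dGq : ∀ (c y : ℝ), HasDerivAt (fun y => G (y + c)) (deriv G (y + c)) y := by
      intro c y
      have := ((hGd (y + c)).hasDerivAt).comp y ((hasDerivAt_id y).add_const c)
      simpa [Function.comp_def] using this
    have dHq : ∀ (c y : ℝ), HasDerivAt (fun y => H (y - c)) (deriv H (y - c)) y := by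
      intro c y
      have := ((hHd (y - c)).hasDerivAt).comp y ((hasDerivAt_id y).sub_const c)
      simpa [Function.comp_def] using this
    have dG'q : ∀ (c y : ℝ), HasDerivAt (fun y => deriv G (y + c)) (deriv (deriv G) (y + c)) y := by
      intro c y
      have := ((hG'd (y + c)).hasDerivAt).comp y ((hasDerivAt_id y).add_const c)
      simpa [Function.comp_def] using this
    have dH'q : ∀ (c y : ℝ), HasDerivAt (fun y => deriv H (y - c)) (deriv (deriv H) (y - c)) y := by
      intro c y
      have := ((hH'd (y - c)).hasDerivAt).comp y ((hasDerivAt_id y).sub_const c)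
      simpa [Function.comp_def] using this
    rw [hfunT, hfunX]
    have e1 : deriv (fun τ => G (x + τ) + H (x - τ))
        = fun τ => deriv G (x + τ) - deriv H (x - τ) := by
      funext τ
      rw [HasDerivAt.deriv (f := fun τ => G (x + τ) + H (x - τ)) ((dGp x τ).add (dHm x τ))]; ring
    have e2 : deriv (fun y => G (y + t) + H (y - t))
        = fun y => deriv G (y + t) + deriv H (y - t) := by
      funext y
      rw [HasDerivAt.deriv (f := fun y => G (y + t) + H (y - t)) ((dGq t y).add (dHq t y))]
    rw [e1, e2]
    have e3 : deriv (fun τ => deriv G (x + τ) - deriv H (x - τ)) t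
        = deriv (deriv G) (x + t) + deriv (deriv H) (x - t) := by
      rw [HasDerivAt.deriv (f := fun τ => deriv G (x + τ) - deriv H (x - τ)) ((dG'p x t).sub (dH'm x t))]; ring
    have e4 : deriv (fun y => deriv G (y + t) + deriv H (y - t)) x
        = deriv (deriv G) (x + t) + deriv (deriv H) (x - t) := by
      rw [HasDerivAt.deriv (f := fun y => deriv G (y + t) + deriv H (y - t)) ((dG'q t x).add (dH'q t x))]
    rw [e3, e4]
  · -- initial condition
    intro x
    rw [add_zero, sub_zero, intervalIntegral.integral_same]
    ring
  · -- terminal condition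
    intro x
    set φ : ℝ → ℝ := fun x => V (x + T) - V (x - T) - (2 * fT x - f0 (x + T) - f0 (x - T))
      with hφ_def
    have hfTd : Differentiable ℝ fT := (hfT.of_le (by simp) : ContDiff ℝ 1 fT).differentiable one_ne_zero
    have hf0d : Differentiable ℝ f0 := (hf0.of_le (by simp) : ContDiff ℝ 1 f0).differentiable one_ne_zero
    have hφ' : ∀ z, HasDerivAt φ 0 z := by
      intro z
      have c1 : HasDerivAt (fun z => V (z + T)) (v (z + T)) z := by
        have := (hV (z + T)).comp z ((hasDerivAt_id z).add_const T)
        simpa [Function.comp_def] using this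
      have c2 : HasDerivAt (fun z => V (z - T)) (v (z - T)) z := by
        have := (hV (z - T)).comp z ((hasDerivAt_id z).sub_const T)
        simpa [Function.comp_def] using this
      have c3 : HasDerivAt (fun z => f0 (z + T)) (deriv f0 (z + T)) z := by
        have := ((hf0d (z + T)).hasDerivAt).comp z ((hasDerivAt_id z).add_const T)
        simpa [Function.comp_def] using this
      have c4 : HasDerivAt (fun z => f0 (z - T)) (deriv f0 (z - T)) z := by
        have := ((hf0d (z - T)).hasDerivAt).comp z ((hasDerivAt_id z).sub_const T)
        simpa [Function.comp_def] using this
      have c5 : HasDerivAt fT (deriv fT z) z := (hfTd z).hasDerivAt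
      have hcomb : HasDerivAt φ
          (v (z + T) - v (z - T) - (2 * deriv fT z - deriv f0 (z + T) - deriv f0 (z - T))) z :=
        (c1.sub c2).sub (((c5.const_mul 2).sub c3).sub c4)
      have hzero : v (z + T) - v (z - T)
          - (2 * deriv fT z - deriv f0 (z + T) - deriv f0 (z - T)) = 0 := by
        linarith [hrec z]
      rwa [hzero] at hcomb
    have hφdiff : Differentiable ℝ φ := fun z => (hφ' z).differentiableAt
    have hconst : φ x = φ 0 := is_const_of_deriv_eq_zero hφdiff (fun z => (hφ' z).deriv) x 0
    have hφ0 : φ 0 = 0 := by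
      have hs := hsplit (-T) T
      have hb : φ 0 = V (0 + T) - V (0 - T) - (2 * fT 0 - f0 (0 + T) - f0 (0 - T)) := rfl
      rw [hb, zero_add, zero_sub, ← hs, hint]
      ring
    have hφx : φ x = 0 := hconst.trans hφ0
    rw [hsplit]
    have : V (x + T) - V (x - T) = 2 * fT x - f0 (x + T) - f0 (x - T) := by
      have := hφx
      simp only [hφ_def] at this
      linarith
    rw [this]; ring


theorem stmt_3 (f0 fT v : ℝ → ℝ) (T : ℝ) (hT : 0 < T)
    (hf0 : ContDiff ℝ (⊤ : ℕ∞) f0) (hfT : ContDiff ℝ (⊤ : ℕ∞) fT)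
    (hvC1 : ContDiffOn ℝ 1 v (Set.Icc (-T) T))
    (hint : ∫ x in (-T)..T, v x = 2 * fT 0 - f0 T - f0 (-T))
    (hend : v T = v (-T) + 2 * deriv fT 0 - deriv f0 T - deriv f0 (-T))
    (hend' : derivWithin v (Set.Icc (-T) T) T
      = derivWithin v (Set.Icc (-T) T) (-T)
        + 2 * deriv (deriv fT) 0 - deriv (deriv f0) T - deriv (deriv f0) (-T))
    (hrec : ∀ x : ℝ,
      v (x + T) = v (x - T) + 2 * deriv fT x - deriv f0 (x + T) - deriv f0 (x - T)) :
    ContDiff ℝ 1 v ∧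
    (ContDiff ℝ 2 (fun p : ℝ × ℝ =>
        (f0 (p.2 + p.1) + f0 (p.2 - p.1)) / 2 + (1 / 2) * ∫ s in (p.2 - p.1)..(p.2 + p.1), v s)) ∧
    (∀ t x : ℝ,
      deriv (deriv (fun τ : ℝ =>
        (f0 (x + τ) + f0 (x - τ)) / 2 + (1 / 2) * ∫ s in (x - τ)..(x + τ), v s)) t
      = deriv (deriv (fun y : ℝ =>
        (f0 (y + t) + f0 (y - t)) / 2 + (1 / 2) * ∫ s in (y - t)..(y + t), v s)) x) ∧
    (∀ x : ℝ,
      (f0 (x + 0) + f0 (x - 0)) / 2 + (1 / 2) * (∫ s in (x - 0)..(x + 0), v s) = f0 x) ∧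
    (∀ x : ℝ,
      (f0 (x + T) + f0 (x - T)) / 2 + (1 / 2) * (∫ s in (x - T)..(x + T), v s) = fT x) := by
  have hv1 : ContDiff ℝ 1 v := part1 f0 fT v T hT hf0 hfT hvC1 hend' hrec
  have h25 := parts25 f0 fT v T hT hf0 hfT hv1 hint hrec
  exact ⟨hv1, h25.1, h25.2.1, h25.2.2.1, h25.2.2.2⟩
end

section
/- For every 1 ≤ p < ∞, every f ∈ C[a,b], every ε > 0, and all constants c₁, c₂, there exists g ∈ C¹[a,b] such that ‖g − f‖_{L^p[a,b]} < ε, g(b) = g(a) + c₁, g'(b) = g'(a) + c₂, and ∫_a^b g(x) dx = ∫_a^b f(x) dx. -/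
/-!
Approximate `f` uniformly within `δ` by a polynomial `q` (Weierstrass). The defects
`α = c₁ - (q b - q a)` and `β = c₂ - (q' b - q' a)` are repaired by adding
`peak n w * (α + β (x - b))` with `w = (x - a) / (b - a)`, where `peak n t = tⁿ (1 + n (1 - t))`
rises from `0` to `1` on `[0, 1]` with zero slope at both ends (for `n ≥ 2`). This correction is
bounded by a constant times `peak n w`, whose mass `2 / (n + 2)` tends to `0`, so it is small in
`Lᵖ`; a final constant shift restores the integral at a cost of at most `δ + O(1 / n)`.
-/

open Set Filter MeasureTheory

noncomputable def peak (n : ℕ) (t : ℝ) : ℝ := t ^ n * (1 + n * (1 - t))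

section peak

variable {n : ℕ} {t : ℝ}

lemma peak_zero (hn : n ≠ 0) : peak n 0 = 0 := by simp [peak, hn]

lemma peak_one (n : ℕ) : peak n 1 = 1 := by simp [peak]

lemma peak_nonneg (n : ℕ) (ht : t ∈ Icc (0 : ℝ) 1) : 0 ≤ peak n t :=
  mul_nonneg (pow_nonneg ht.1 n) (by nlinarith [n.cast_nonneg (α := ℝ), ht.2])

lemma peak_le_one (n : ℕ) (ht : t ∈ Icc (0 : ℝ) 1) : peak n t ≤ 1 :=
  have ⟨h0, h1⟩ := ht
  calc peak n t ≤ t ^ n * (1 + (1 - t)) ^ n :=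
        mul_le_mul_of_nonneg_left (one_add_mul_le_pow (by linarith) n) (pow_nonneg h0 n)
    _ = ((2 - t) * t) ^ n := by rw [← mul_pow]; ring
    _ ≤ 1 := pow_le_one₀ (by nlinarith) (by nlinarith)

lemma contDiff_peak (n : ℕ) : ContDiff ℝ ⊤ (peak n) := by
  unfold peak; fun_prop

lemma hasDerivAt_peak (n : ℕ) (t : ℝ) :
    HasDerivAt (peak n) (n * t ^ (n - 1) * (1 + n * (1 - t)) + t ^ n * (n * -1)) t :=
  (hasDerivAt_pow n t).mul ((((hasDerivAt_id' t).const_sub 1).const_mul _).const_add 1)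

lemma hasDerivAt_peak_zero (hn : 2 ≤ n) : HasDerivAt (peak n) 0 0 := by
  convert hasDerivAt_peak n 0 using 1
  simp [zero_pow (by omega : n - 1 ≠ 0), zero_pow (by omega : n ≠ 0)]

lemma hasDerivAt_peak_one (n : ℕ) : HasDerivAt (peak n) 0 1 := by
  convert hasDerivAt_peak n 1 using 1
  simp

lemma integral_peak (n : ℕ) : ∫ t in (0 : ℝ)..1, peak n t = 2 / (n + 2) := by
  have h (t : ℝ) : peak n t = (n + 1) * t ^ n - n * t ^ (n + 1) := by simp only [peak]; ring
  simp_rw [h]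
  rw [intervalIntegral.integral_sub ((by fun_prop : Continuous _).intervalIntegrable _ _)
    ((by fun_prop : Continuous _).intervalIntegrable _ _)]
  simp only [intervalIntegral.integral_const_mul, integral_pow]
  field_simp
  push_cast
  ring

end peak

lemma sub_div_sub_mem_Icc_zero_one {a b x : ℝ} (hab : a < b) (hx : x ∈ Icc a b) :
    (x - a) / (b - a) ∈ Icc (0 : ℝ) 1 :=
  ⟨div_nonneg (by linarith [hx.1]) (by linarith),
    (div_le_one (by linarith)).mpr (by linarith [hx.2])⟩

lemma hasDerivAt_sub_div_sub (a b x : ℝ) :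
    HasDerivAt (fun x => (x - a) / (b - a)) (1 / (b - a)) x :=
  ((hasDerivAt_id' x).sub_const a).div_const (b - a)

lemma integral_peak_sub_div_sub (n : ℕ) {a b : ℝ} (hab : a ≠ b) :
    ∫ x in a..b, peak n ((x - a) / (b - a)) = (b - a) * (2 / (n + 2)) := by
  have hba : b - a ≠ 0 := sub_ne_zero.mpr hab.symm
  simp_rw [sub_div _ a (b - a)]
  rw [intervalIntegral.integral_comp_div_sub (peak n) hba, ← sub_div, ← sub_div, sub_self,
    zero_div, div_self hba, integral_peak, smul_eq_mul]

noncomputable def boundaryCorrector (a b α β : ℝ) (n : ℕ) (x : ℝ) : ℝ :=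
  peak n ((x - a) / (b - a)) * (α + β * (x - b))

section boundaryCorrector

variable {a b K : ℝ} (α β : ℝ) {n : ℕ}

lemma contDiff_boundaryCorrector (n : ℕ) : ContDiff ℝ ⊤ (boundaryCorrector a b α β n) :=
  ((contDiff_peak n).comp (by fun_prop)).mul (by fun_prop)

lemma boundaryCorrector_left (hn : n ≠ 0) : boundaryCorrector a b α β n a = 0 := by
  simp [boundaryCorrector, peak_zero hn]

lemma boundaryCorrector_right (hab : a ≠ b) : boundaryCorrector a b α β n b = α := by
  simp [boundaryCorrector, div_self (sub_ne_zero.mpr hab.symm), peak_one]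

lemma hasDerivAt_boundaryCorrector_left (hn : 2 ≤ n) :
    HasDerivAt (boundaryCorrector a b α β n) 0 a := by
  have hpeak := (hasDerivAt_peak_zero hn).comp_of_eq a (hasDerivAt_sub_div_sub a b a) (by simp)
  refine (hpeak.mul (((hasDerivAt_id' a).sub_const b).const_mul β |>.const_add α)).congr_deriv ?_
  simp [peak_zero (by omega : n ≠ 0)]

lemma hasDerivAt_boundaryCorrector_right (hab : a ≠ b) :
    HasDerivAt (boundaryCorrector a b α β n) β b := by
  have hba : (b - a) / (b - a) = 1 := div_self (sub_ne_zero.mpr hab.symm)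
  have hpeak := (hasDerivAt_peak_one n).comp_of_eq b (hasDerivAt_sub_div_sub a b b) hba.symm
  refine (hpeak.mul (((hasDerivAt_id' b).sub_const b).const_mul β |>.const_add α)).congr_deriv ?_
  simp [hba, peak_one]

variable {α β}

lemma abs_boundaryCorrector_le (hab : a < b) (hK : |α| + |β| * (b - a) ≤ K) {x : ℝ}
    (hx : x ∈ Icc a b) :
    |boundaryCorrector a b α β n x| ≤ K * peak n ((x - a) / (b - a)) := by
  have hpeak := peak_nonneg n (sub_div_sub_mem_Icc_zero_one hab hx)
  rw [boundaryCorrector, abs_mul, abs_of_nonneg hpeak, mul_comm K]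
  refine mul_le_mul_of_nonneg_left (le_trans ?_ hK) hpeak
  calc |α + β * (x - b)| ≤ |α| + |β| * |x - b| := by rw [← abs_mul]; exact abs_add_le _ _
    _ ≤ |α| + |β| * (b - a) := by
      gcongr; rw [abs_of_nonpos (by linarith [hx.2])]; linarith [hx.1]

lemma abs_integral_boundaryCorrector_le (hab : a < b) (hK : |α| + |β| * (b - a) ≤ K) :
    |∫ x in a..b, boundaryCorrector a b α β n x| ≤ K * ((b - a) * (2 / (n + 2))) :=
  calc |∫ x in a..b, boundaryCorrector a b α β n x|
      ≤ ∫ x in a..b, |boundaryCorrector a b α β n x| :=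
        intervalIntegral.abs_integral_le_integral_abs hab.le
    _ ≤ ∫ x in a..b, K * peak n ((x - a) / (b - a)) :=
        intervalIntegral.integral_mono_on hab.le
          ((contDiff_boundaryCorrector α β n).continuous.abs.intervalIntegrable _ _)
          ((continuous_const.mul ((contDiff_peak n).continuous.comp (by fun_prop))).intervalIntegrable
            _ _)
          (fun x hx => abs_boundaryCorrector_le hab hK hx)
    _ = _ := by rw [intervalIntegral.integral_const_mul, integral_peak_sub_div_sub n hab.ne]

end boundaryCorrector

lemma Real.rpow_add_le_mul_rpow_add_rpow {x y p : ℝ} (hx : 0 ≤ x) (hy : 0 ≤ y) (hp : 1 ≤ p) :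
    (x + y) ^ p ≤ 2 ^ (p - 1) * (x ^ p + y ^ p) := by
  lift x to NNReal using hx
  lift y to NNReal using hy
  exact_mod_cast NNReal.rpow_add_le_mul_rpow_add_rpow x y hp

lemma integral_abs_rpow_le_of_abs_le {a b p u K : ℝ} {v φ : ℝ → ℝ} (hab : a ≤ b) (hp : 1 ≤ p)
    (hv : ContinuousOn v (Icc a b)) (hφ : ContinuousOn φ (Icc a b)) (hu : 0 ≤ u) (hK : 0 ≤ K)
    (hφ0 : ∀ x ∈ Icc a b, 0 ≤ φ x) (hφ1 : ∀ x ∈ Icc a b, φ x ≤ 1)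
    (hvφ : ∀ x ∈ Icc a b, |v x| ≤ u + K * φ x) :
    ∫ x in a..b, |v x| ^ p ≤ 2 ^ (p - 1) * ((b - a) * u ^ p + K ^ p * ∫ x in a..b, φ x) := by
  have hp0 : 0 ≤ p := by linarith
  have hpointwise (x : ℝ) (hx : x ∈ Icc a b) :
      |v x| ^ p ≤ 2 ^ (p - 1) * (u ^ p + K ^ p * φ x) :=
    calc |v x| ^ p ≤ (u + K * φ x) ^ p :=
          Real.rpow_le_rpow (abs_nonneg _) (hvφ x hx) hp0
      _ ≤ 2 ^ (p - 1) * (u ^ p + (K * φ x) ^ p) :=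
          Real.rpow_add_le_mul_rpow_add_rpow hu (mul_nonneg hK (hφ0 x hx)) hp
      _ ≤ 2 ^ (p - 1) * (u ^ p + K ^ p * φ x) := by
          rw [Real.mul_rpow hK (hφ0 x hx)]
          gcongr
          exact Real.rpow_le_self_of_le_one (hφ0 x hx) (hφ1 x hx) hp
  have hφi : IntervalIntegrable φ volume a b :=
    (hφ.mono (uIcc_of_le hab).subset).intervalIntegrable
  calc ∫ x in a..b, |v x| ^ p ≤ ∫ x in a..b, 2 ^ (p - 1) * (u ^ p + K ^ p * φ x) :=
        intervalIntegral.integral_mono_on hab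
          ((hv.abs.rpow_const fun _ _ => Or.inr hp0).mono (uIcc_of_le hab).subset
            |>.intervalIntegrable)
          ((intervalIntegrable_const.add (hφi.const_mul _)).const_mul _) hpointwise
    _ = 2 ^ (p - 1) * ((b - a) * u ^ p + K ^ p * ∫ x in a..b, φ x) := by
        rw [intervalIntegral.integral_const_mul, intervalIntegral.integral_add
          intervalIntegrable_const (hφi.const_mul _), intervalIntegral.integral_const,
          intervalIntegral.integral_const_mul, smul_eq_mul]

lemma abs_integral_sub_integral_le {a b δ : ℝ} {f u : ℝ → ℝ} (hab : a ≤ b)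
    (hf : IntervalIntegrable f volume a b) (hu : IntervalIntegrable u volume a b)
    (hfu : ∀ x ∈ Icc a b, |u x - f x| ≤ δ) :
    |(∫ x in a..b, f x) - ∫ x in a..b, u x| ≤ δ * (b - a) := by
  have := intervalIntegral.norm_integral_le_of_norm_le_const (C := δ) (f := fun x => f x - u x)
    fun x hx => by
      rw [Real.norm_eq_abs, abs_sub_comm]
      exact hfu x (Ioc_subset_Icc_self (uIoc_of_le hab ▸ hx))
  rwa [intervalIntegral.integral_sub hf hu, Real.norm_eq_abs, abs_of_nonneg (sub_nonneg.mpr hab)]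
    at this

theorem exists_contDiff_boundary_jumps_integral_eq {a b δ K : ℝ} (hab : a < b) {f u : ℝ → ℝ}
    (hf : ContinuousOn f (Icc a b)) (hu : ContDiff ℝ 1 u) (hfu : ∀ x ∈ Icc a b, |u x - f x| ≤ δ)
    (c1 c2 : ℝ) (hK : |c1 - (u b - u a)| + |c2 - (deriv u b - deriv u a)| * (b - a) ≤ K)
    {n : ℕ} (hn : 2 ≤ n) :
    ∃ g : ℝ → ℝ, ContDiff ℝ 1 g ∧ g b = g a + c1 ∧
      derivWithin g (Icc a b) b = derivWithin g (Icc a b) a + c2 ∧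
      ∫ x in a..b, g x = ∫ x in a..b, f x ∧
      ∀ x ∈ Icc a b, |g x - f x| ≤ (2 * δ + K * (2 / (n + 2))) + K * peak n ((x - a) / (b - a)) := by
  set h := boundaryCorrector a b (c1 - (u b - u a)) (c2 - (deriv u b - deriv u a)) n
  set c := ((∫ x in a..b, f x) - (∫ x in a..b, u x) - ∫ x in a..b, h x) / (b - a)
  have hba : 0 < b - a := sub_pos.mpr hab
  have hh : ContDiff ℝ 1 h := (contDiff_boundaryCorrector _ _ n).of_le le_top
  have hfi : IntervalIntegrable f volume a b :=
    (hf.mono (uIcc_of_le hab.le).subset).intervalIntegrable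
  have hui := hu.continuous.intervalIntegrable (μ := volume) a b
  have hhi := hh.continuous.intervalIntegrable (μ := volume) a b
  have hc : |c| ≤ δ + K * (2 / (n + 2)) := by
    rw [abs_div, abs_of_pos hba, div_le_iff₀ hba]
    calc _ ≤ |(∫ x in a..b, f x) - ∫ x in a..b, u x| + |∫ x in a..b, h x| := abs_sub _ _
      _ ≤ δ * (b - a) + K * ((b - a) * (2 / (n + 2))) :=
        add_le_add (abs_integral_sub_integral_le hab.le hfi hui hfu)
          (abs_integral_boundaryCorrector_le hab hK)
      _ = (δ + K * (2 / (n + 2))) * (b - a) := by ring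
  have hderiv {x g' : ℝ} (hx : x ∈ Icc a b) (hg : HasDerivAt (fun x => u x + h x + c) g' x) :
      derivWithin (fun x => u x + h x + c) (Icc a b) x = g' :=
    hg.hasDerivWithinAt.derivWithin (uniqueDiffOn_Icc hab x hx)
  refine ⟨fun x => u x + h x + c, (hu.add hh).add contDiff_const, ?_, ?_, ?_, ?_⟩
  · simp only [h, boundaryCorrector_left _ _ (by omega : n ≠ 0),
      boundaryCorrector_right _ _ hab.ne]
    ring
  · rw [hderiv (right_mem_Icc.mpr hab.le) (((hu.differentiable one_ne_zero b).hasDerivAt.add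
        (hasDerivAt_boundaryCorrector_right _ _ hab.ne)).add_const c),
      hderiv (left_mem_Icc.mpr hab.le) (((hu.differentiable one_ne_zero a).hasDerivAt.add
        (hasDerivAt_boundaryCorrector_left _ _ hn)).add_const c)]
    ring
  · rw [intervalIntegral.integral_add (hui.add hhi) intervalIntegrable_const,
      intervalIntegral.integral_add hui hhi, intervalIntegral.integral_const, smul_eq_mul]
    simp only [c]
    field_simp
    ring
  · intro x hx
    calc |u x + h x + c - f x| = |(u x - f x) + c + h x| := by ring_nf
      _ ≤ |u x - f x| + |c| + |h x| := abs_add_three _ _ _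
      _ ≤ δ + (δ + K * (2 / (n + 2))) + K * peak n ((x - a) / (b - a)) :=
        add_le_add_three (hfu x hx) hc (abs_boundaryCorrector_le hab hK hx)
      _ = _ := by ring

lemma exists_pos_lt_of_continuousAt {F : ℝ → ℝ} {ε : ℝ} (hF : ContinuousAt F 0) (h : F 0 < ε) :
    ∃ δ > 0, F δ < ε :=
  ((hF.eventually (gt_mem_nhds h)).filter_mono nhdsWithin_le_nhds |>.and
    (self_mem_nhdsWithin (s := Ioi 0))).exists.imp fun _ hδ => ⟨hδ.2, hδ.1⟩

lemma exists_two_le_lt_of_continuousAt {F : ℝ → ℝ} {ε : ℝ} (hF : ContinuousAt F 0)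
    (h : F 0 < ε) : ∃ n : ℕ, 2 ≤ n ∧ F (2 / (n + 2)) < ε :=
  ((eventually_ge_atTop 2).and <| (hF.tendsto.comp <| tendsto_const_nhds.div_atTop <|
    tendsto_atTop_add_const_right _ _ tendsto_natCast_atTop_atTop).eventually
      (gt_mem_nhds h)).exists

theorem stmt_5 (a b : ℝ) (hab : a < b) (p : ℝ) (hp : 1 ≤ p)
    (f : ℝ → ℝ) (hf : ContinuousOn f (Set.Icc a b))
    (ε : ℝ) (hε : 0 < ε) (c1 c2 : ℝ) :
    ∃ g : ℝ → ℝ, ContDiffOn ℝ 1 g (Set.Icc a b) ∧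
      (∫ x in a..b, |g x - f x| ^ p) ^ (1 / p) < ε ∧
      g b = g a + c1 ∧
      derivWithin g (Set.Icc a b) b = derivWithin g (Set.Icc a b) a + c2 ∧
      ∫ x in a..b, g x = ∫ x in a..b, f x := by
  have hp0 : 0 < p := by linarith
  have hεp : 0 < ε ^ p := Real.rpow_pos_of_pos hε p
  obtain ⟨δ, hδ, hδε⟩ := exists_pos_lt_of_continuousAt
    (F := fun δ => 2 ^ (p - 1) * ((b - a) * (2 * δ) ^ p)) (by fun_prop (disch := right; linarith))
    (by simpa [Real.zero_rpow hp0.ne'] using hεp)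
  obtain ⟨q, hq⟩ := exists_polynomial_near_of_continuousOn a b f hf δ hδ
  set K := |c1 - (q.eval b - q.eval a)| + |c2 - (deriv q.eval b - deriv q.eval a)| * (b - a)
  have hK : 0 ≤ K := by have := sub_pos.mpr hab; positivity
  obtain ⟨n, hn, hnε⟩ := exists_two_le_lt_of_continuousAt
    (F := fun s => 2 ^ (p - 1) * ((b - a) * (2 * δ + K * s) ^ p + K ^ p * ((b - a) * s)))
    (by fun_prop (disch := right; linarith)) (by simpa using hδε)
  obtain ⟨g, hg, hgb, hg'b, hgf, hgf_le⟩ := exists_contDiff_boundary_jumps_integral_eq hab hf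
    (q.contDiff_aeval 1) (fun x hx => (hq x hx).le) c1 c2 le_rfl hn
  refine ⟨g, hg.contDiffOn, ?_, hgb, hg'b, hgf⟩
  rw [one_div, Real.rpow_inv_lt_iff_of_pos (intervalIntegral.integral_nonneg hab.le
    fun x _ => by positivity) hε.le hp0]
  calc ∫ x in a..b, |g x - f x| ^ p
      ≤ 2 ^ (p - 1) * ((b - a) * (2 * δ + K * (2 / (n + 2))) ^ p
        + K ^ p * ∫ x in a..b, peak n ((x - a) / (b - a))) :=
      integral_abs_rpow_le_of_abs_le hab.le hp (hg.continuous.continuousOn.sub hf)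
        ((contDiff_peak n).continuous.comp (by fun_prop)).continuousOn (by positivity) hK
        (fun x hx => peak_nonneg n (sub_div_sub_mem_Icc_zero_one hab hx))
        (fun x hx => peak_le_one n (sub_div_sub_mem_Icc_zero_one hab hx)) hgf_le
    _ < ε ^ p := by rwa [integral_peak_sub_div_sub n hab.ne]
end

section
/- For any f ∈ C[a,b], any ε > 0, and any constant c₁, there exists a continuous function h on [a,b] with ‖h − f‖_{L^p[a,b]} < ε (1 ≤ p < ∞), h(b) = h(a) + c₁, and ∫_a^b h(x) dx = ∫_a^b f(x) dx. -/
/-!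
With `d := c1 - (f b - f a)`, take `h := f + g` where
`g x = d * (((x - a) / (b - a)) ^ N - 1 / (N + 1))`. Then `g b - g a = d` and, since
`∫ x in a..b, ((x - a) / (b - a)) ^ N = (b - a) / (N + 1)`, also `∫ g = 0`. On `[a, b]` we have
`|g| ≤ |d|` and `|g| ≤ |d| * (((x - a) / (b - a)) ^ N + 1 / (N + 1))`, so
`∫ |g| ^ p ≤ |d| ^ (p - 1) * ∫ |g| ≤ 2 * |d| ^ p * (b - a) / (N + 1)`,
which is small for large `N`.
-/

open Filter Topology

lemma integral_div_sub_pow (a b : ℝ) (N : ℕ) :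
    ∫ x in a..b, ((x - a) / (b - a)) ^ N = (b - a) / (N + 1) := by
  rcases eq_or_ne a b with rfl | hab
  · simp
  have hba : b - a ≠ 0 := sub_ne_zero.mpr hab.symm
  simp_rw [div_pow]
  rw [intervalIntegral.integral_div, intervalIntegral.integral_comp_sub_right (· ^ N) a]
  simp only [sub_self, integral_pow]
  field_simp
  ring

noncomputable def endpointCorrection (a b d : ℝ) (N : ℕ) (x : ℝ) : ℝ :=
  d * (((x - a) / (b - a)) ^ N - 1 / (N + 1))

section endpointCorrection

variable (a b d : ℝ) (N : ℕ)

@[fun_prop]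
lemma continuous_endpointCorrection : Continuous (endpointCorrection a b d N) := by
  unfold endpointCorrection; fun_prop

lemma endpointCorrection_right_sub_left (hab : a ≠ b) (hN : N ≠ 0) :
    endpointCorrection a b d N b - endpointCorrection a b d N a = d := by
  have hba : b - a ≠ 0 := sub_ne_zero.mpr hab.symm
  simp [endpointCorrection, hba, hN]
  ring

lemma integral_endpointCorrection : ∫ x in a..b, endpointCorrection a b d N x = 0 := by
  unfold endpointCorrection
  rw [intervalIntegral.integral_const_mul, intervalIntegral.integral_sub
    (by apply Continuous.intervalIntegrable; fun_prop) intervalIntegrable_const,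
    integral_div_sub_pow, intervalIntegral.integral_const, smul_eq_mul]
  ring

lemma abs_endpointCorrection_le {x : ℝ} (hx : x ∈ Set.Icc a b) :
    |endpointCorrection a b d N x| ≤ |d| ∧
      |endpointCorrection a b d N x| ≤ |d| * (((x - a) / (b - a)) ^ N + 1 / (N + 1)) := by
  have hu₀ : 0 ≤ (x - a) / (b - a) := div_nonneg (by linarith [hx.1]) (by linarith [hx.1, hx.2])
  have hu₁ : (x - a) / (b - a) ≤ 1 :=
    div_le_one_of_le₀ (by linarith [hx.2]) (by linarith [hx.1, hx.2])
  have hv₀ : 0 ≤ 1 / ((N : ℝ) + 1) := by positivity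
  have hv₁ : 1 / ((N : ℝ) + 1) ≤ 1 :=
    (div_le_one (by positivity)).mpr (by linarith [N.cast_nonneg (α := ℝ)])
  have hpow₀ := pow_nonneg hu₀ N
  have hpow₁ := pow_le_one₀ hu₀ hu₁ (n := N)
  rw [endpointCorrection, abs_mul]
  constructor
  · exact mul_le_of_le_one_right (abs_nonneg d) (abs_sub_le_iff.mpr ⟨by linarith, by linarith⟩)
  · exact mul_le_mul_of_nonneg_left
      (abs_sub_le_iff.mpr ⟨by linarith, by linarith⟩) (abs_nonneg d)

end endpointCorrection

lemma rpow_le_rpow_sub_one_mul {y M p : ℝ} (hy : 0 ≤ y) (hyM : y ≤ M) (hp : 1 ≤ p) :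
    y ^ p ≤ M ^ (p - 1) * y := by
  calc y ^ p = y ^ (p - 1) * y := by
        rw [← Real.rpow_add_one' hy (by linarith), sub_add_cancel]
    _ ≤ M ^ (p - 1) * y := by gcongr

lemma integral_abs_endpointCorrection_rpow_le {a b : ℝ} (hab : a ≤ b) (d : ℝ) (N : ℕ)
    {p : ℝ} (hp : 1 ≤ p) :
    ∫ x in a..b, |endpointCorrection a b d N x| ^ p ≤ 2 * |d| ^ p * (b - a) / (N + 1) := by
  have hdom : ∀ x ∈ Set.Icc a b, |endpointCorrection a b d N x| ^ p ≤
      |d| ^ p * (((x - a) / (b - a)) ^ N + 1 / (N + 1)) := by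
    intro x hx
    obtain ⟨hle, hle'⟩ := abs_endpointCorrection_le a b d N hx
    calc |endpointCorrection a b d N x| ^ p
        ≤ |d| ^ (p - 1) * |endpointCorrection a b d N x| :=
          rpow_le_rpow_sub_one_mul (abs_nonneg _) hle hp
      _ ≤ |d| ^ (p - 1) * (|d| * (((x - a) / (b - a)) ^ N + 1 / (N + 1))) := by gcongr
      _ = |d| ^ p * (((x - a) / (b - a)) ^ N + 1 / (N + 1)) := by
          rw [← mul_assoc, ← Real.rpow_add_one' (abs_nonneg d) (by linarith), sub_add_cancel]
  calc ∫ x in a..b, |endpointCorrection a b d N x| ^ p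
      ≤ ∫ x in a..b, |d| ^ p * (((x - a) / (b - a)) ^ N + 1 / (N + 1)) :=
        intervalIntegral.integral_mono_on hab
          (by apply Continuous.intervalIntegrable; fun_prop (disch := positivity))
          (by apply Continuous.intervalIntegrable; fun_prop) hdom
    _ = 2 * |d| ^ p * (b - a) / (N + 1) := by
        rw [intervalIntegral.integral_const_mul, intervalIntegral.integral_add
          (by apply Continuous.intervalIntegrable; fun_prop) intervalIntegrable_const,
          integral_div_sub_pow, intervalIntegral.integral_const, smul_eq_mul]
        ring

theorem stmt_6 (a b : ℝ) (hab : a < b) (p : ℝ) (hp : 1 ≤ p)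
    (f : ℝ → ℝ) (hf : ContinuousOn f (Set.Icc a b))
    (ε : ℝ) (hε : 0 < ε) (c1 : ℝ) :
    ∃ h : ℝ → ℝ, ContinuousOn h (Set.Icc a b) ∧
      (∫ x in a..b, |h x - f x| ^ p) ^ (1 / p) < ε ∧
      h b = h a + c1 ∧
      ∫ x in a..b, h x = ∫ x in a..b, f x := by
  set d := c1 - (f b - f a)
  have hsmall :
      Tendsto (fun N : ℕ ↦ 2 * |d| ^ p * (b - a) * (1 / ((N : ℝ) + 1))) atTop (𝓝 0) := by
    simpa using tendsto_one_div_add_atTop_nhds_zero_nat.const_mul (2 * |d| ^ p * (b - a))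
  obtain ⟨N, hN, hNsmall⟩ := ((eventually_ne_atTop 0).and
    (hsmall.eventually (gt_mem_nhds (Real.rpow_pos_of_pos hε p)))).exists
  set g := endpointCorrection a b d N
  refine ⟨fun x ↦ f x + g x, hf.add (by fun_prop), ?_, ?_, ?_⟩
  · have hLp : ∫ x in a..b, |g x| ^ p < ε ^ p :=
      (integral_abs_endpointCorrection_rpow_le hab.le d N hp).trans_lt
        (by rwa [mul_one_div] at hNsmall)
    simp only [add_sub_cancel_left, one_div]
    exact (Real.rpow_inv_lt_iff_of_pos (intervalIntegral.integral_nonneg hab.le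
      fun x _ ↦ by positivity) hε.le (by linarith)).mpr hLp
  · linarith [endpointCorrection_right_sub_left a b d N hab.ne hN]
  · rw [intervalIntegral.integral_add (hf.intervalIntegrable_of_Icc hab.le)
      ((continuous_endpointCorrection a b d N).intervalIntegrable a b),
      integral_endpointCorrection, add_zero]
end

section
/- Let a₁(x) ≥ a₂(x) ≥ ... ≥ a_k(x) be continuous functions on [b,c], set a₀ = +∞ and a_{k+1} = −∞. Then for every A ∈ ℝ there exist j ∈ {0,...,k} and a continuous function h on [b,c] with a_{j+1}(x) ≤ h(x) ≤ a_j(x) for all x and ∫_b^c h(x) dx = A. (When j=0 or j=k the one-sided bound by the finite function suffices along with appropriate scaling.) -/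
/-!
If `A` lies between `∫ a_{j+1}` and `∫ a_j`, the convex combination
`a_{j+1} + t (a_j - a_{j+1})` with the right `t ∈ [0, 1]` stays in the strip and has integral `A`,
because the integral is affine in `t`. If `A` is above `∫ a_1` or below `∫ a_k`, shifting `a_1`
up, resp. `a_k` down, by a constant does the job. The index `j` exists by a discrete intermediate
value argument, since the integrals `∫ a_i` decrease.
-/

open MeasureTheory (volume)
open Set intervalIntegral

section

variable {b c A : ℝ} {f g : ℝ → ℝ}

theorem integral_add_const_div_sub_self (hbc : b < c) (hf : IntervalIntegrable f volume b c)
    (A : ℝ) : ∫ x in b..c, (f x + (A - ∫ x in b..c, f x) / (c - b)) = A := by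
  rw [integral_add hf intervalIntegrable_const, integral_const, smul_eq_mul,
    mul_div_cancel₀ _ (sub_pos.2 hbc).ne']
  ring

theorem exists_continuousOn_ge_integral_eq (hbc : b < c) (hf : ContinuousOn f (Icc b c))
    (hA : ∫ x in b..c, f x ≤ A) :
    ∃ h, ContinuousOn h (Icc b c) ∧ ∫ x in b..c, h x = A ∧ ∀ x ∈ Icc b c, f x ≤ h x :=
  ⟨_, hf.add continuousOn_const,
    integral_add_const_div_sub_self hbc (hf.intervalIntegrable_of_Icc hbc.le) A,
    fun _ _ => le_add_of_nonneg_right (div_nonneg (sub_nonneg.2 hA) (sub_pos.2 hbc).le)⟩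

theorem exists_continuousOn_le_integral_eq (hbc : b < c) (hf : ContinuousOn f (Icc b c))
    (hA : A ≤ ∫ x in b..c, f x) :
    ∃ h, ContinuousOn h (Icc b c) ∧ ∫ x in b..c, h x = A ∧ ∀ x ∈ Icc b c, h x ≤ f x :=
  ⟨_, hf.add continuousOn_const,
    integral_add_const_div_sub_self hbc (hf.intervalIntegrable_of_Icc hbc.le) A,
    fun _ _ => add_le_of_nonpos_right
      (div_nonpos_of_nonpos_of_nonneg (sub_nonpos.2 hA) (sub_pos.2 hbc).le)⟩

theorem exists_continuousOn_between_integral_eq (hbc : b ≤ c) (hg : ContinuousOn g (Icc b c))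
    (hf : ContinuousOn f (Icc b c)) (hgf : ∀ x ∈ Icc b c, g x ≤ f x)
    (hgA : ∫ x in b..c, g x ≤ A) (hAf : A ≤ ∫ x in b..c, f x) :
    ∃ h, ContinuousOn h (Icc b c) ∧ ∫ x in b..c, h x = A ∧
      ∀ x ∈ Icc b c, g x ≤ h x ∧ h x ≤ f x := by
  set d := (∫ x in b..c, f x) - ∫ x in b..c, g x
  -- if `d = 0` then `t = 0` by the junk value of division, and `A = ∫ g` anyway
  set t := (A - ∫ x in b..c, g x) / d
  have ht : 0 ≤ t ∧ t ≤ 1 := ⟨div_nonneg (by linarith) (by linarith),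
    div_le_one_of_le₀ (by linarith) (by linarith)⟩
  have htd : t * d = A - ∫ x in b..c, g x := by
    rcases eq_or_ne d 0 with hd | hd
    · simp only [t, hd, div_zero, zero_mul]; linarith
    · exact div_mul_cancel₀ _ hd
  have hgi := hg.intervalIntegrable_of_Icc (μ := volume) hbc
  have hfi := hf.intervalIntegrable_of_Icc (μ := volume) hbc
  refine ⟨fun x => g x + t * (f x - g x), hg.add (continuousOn_const.mul (hf.sub hg)), ?_,
    fun x hx => ⟨?_, ?_⟩⟩
  · rw [integral_add hgi ((hfi.sub hgi).const_mul t), integral_const_mul,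
      integral_sub hfi hgi]
    linarith
  · nlinarith [hgf x hx]
  · nlinarith [hgf x hx]

end

theorem stmt_8 (b c : ℝ) (hbc : b < c) (k : ℕ)
    (a : Fin k → ℝ → ℝ)
    (hcont : ∀ i, ContinuousOn (a i) (Set.Icc b c))
    (hmono : ∀ i j : Fin k, i ≤ j → ∀ x ∈ Set.Icc b c, a j x ≤ a i x)
    (A : ℝ) :
    ∃ j : ℕ, ∃ hjk : j ≤ k, ∃ h : ℝ → ℝ,
      ContinuousOn h (Set.Icc b c) ∧
      (∫ x in b..c, h x) = A ∧
      (∀ hj : 1 ≤ j, ∀ x ∈ Set.Icc b c, h x ≤ a ⟨j - 1, by omega⟩ x) ∧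
      (∀ hj : j < k, ∀ x ∈ Set.Icc b c, a ⟨j, hj⟩ x ≤ h x) := by
  let below (m : ℕ) : Prop := ∀ hm : m < k, ∫ x in b..c, a ⟨m, hm⟩ x ≤ A
  by_cases h0 : below 0
  · rcases k.eq_zero_or_pos with rfl | hk
    · refine ⟨0, le_rfl, fun _ => A / (c - b), continuousOn_const, ?_, nofun, nofun⟩
      rw [integral_const, smul_eq_mul, mul_div_cancel₀ _ (sub_pos.2 hbc).ne']
    obtain ⟨h, hc, hA, hle⟩ := exists_continuousOn_ge_integral_eq hbc (hcont _) (h0 hk)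
    exact ⟨0, k.zero_le, h, hc, hA, nofun, fun _ => hle⟩
  obtain ⟨n, hn, hn1⟩ := Nat.exists_not_and_succ_of_not_zero_of_exists h0
    ⟨k, fun hk => absurd hk k.lt_irrefl⟩
  obtain ⟨hnk, hAn⟩ : ∃ hnk : n < k, A < ∫ x in b..c, a ⟨n, hnk⟩ x := by
    simpa only [below, not_forall, not_le] using hn
  rcases (Nat.succ_le_of_lt hnk).lt_or_eq with hlt | rfl
  · obtain ⟨h, hc, hA, hbounds⟩ := exists_continuousOn_between_integral_eq hbc.le
      (hcont ⟨n + 1, hlt⟩) (hcont ⟨n, hnk⟩) (hmono _ _ (Fin.mk_le_mk.2 n.le_succ)) (hn1 hlt) hAn.le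
    exact ⟨n + 1, hlt.le, h, hc, hA, fun _ x hx => (hbounds x hx).2,
      fun _ x hx => (hbounds x hx).1⟩
  · obtain ⟨h, hc, hA, hle⟩ := exists_continuousOn_le_integral_eq hbc (hcont _) hAn.le
    exact ⟨n + 1, le_rfl, h, hc, hA, fun _ => hle, fun h => (lt_irrefl _ h).elim⟩
end

section
/- Let a₁(x) ≥ ... ≥ a_k(x) be continuous on [b,c], a₀=+∞, a_{k+1}=−∞, and let U(h,x) be such that for each j, ∂U/∂h = c_j whenever a_{j+1}(x) < h < a_j(x), where c₀ > c₁ > ... > c_k is strictly decreasing, and U(·,x) is continuous and piecewise linear in h. Fix A ∈ ℝ and j with ∫_b^c a_{j+1} ≤ A ≤ ∫_b^c a_j. Then among all continuous h on [b,c] with ∫_b^c h = A, the functional I[h] = ∫_b^c U(h(x),x) dx attains its minimum exactly at those h satisfying a_{j+1}(x) ≤ h(x) ≤ a_j(x) for all x, and the minimum value is ∫_b^c U(a_{j+1}(x),x) dx + c_j (A − ∫_b^c a_{j+1}(x) dx). -/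
/-!
Subtracting the line of slope `c_j` from `U(·, x)` leaves a function that strictly decreases below
`a_{j+1}(x)`, is constant on `[a_{j+1}(x), a_j(x)]` and strictly increases above `a_j(x)`, because
the slopes `c_i` decrease. So the line of slope `c_j` through `(a_{j+1}(x), U(a_{j+1}(x), x))`
supports `U(·, x)` and touches it exactly on the strip. Integrating in `x`, the constraint
`∫ h = A` turns this into `I[h] ≥ ∫ U(a_{j+1}) + c_j (A - ∫ a_{j+1})`, and since the gap is a
continuous nonnegative function, equality holds iff `h` stays in the strip.
-/

open Set MeasureTheory intervalIntegral

section Pieces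

variable {α β : Type*} [LinearOrder α] [Preorder β] {f : α → β} {p : ℕ → α} {m n : ℕ}

theorem strictMonoOn_Ici_of_strictMonoOn_Icc (hmn : m ≤ n)
    (hp : ∀ i, m ≤ i → i < n → p (i + 1) ≤ p i) (htop : StrictMonoOn f (Ici (p m)))
    (hpiece : ∀ i, m ≤ i → i < n → StrictMonoOn f (Icc (p (i + 1)) (p i))) :
    StrictMonoOn f (Ici (p n)) := by
  induction n, hmn using Nat.le_induction with
  | base => exact htop
  | succ n hmn ih =>
    have hle := hp n hmn n.lt_succ_self
    have hunion := (hpiece n hmn n.lt_succ_self).union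
      (ih (fun i hi hin => hp i hi (by omega)) fun i hi hin => hpiece i hi (by omega))
      (isGreatest_Icc hle) isLeast_Ici
    rwa [Icc_union_Ici_eq_Ici hle] at hunion

theorem strictAntiOn_Iic_of_strictAntiOn_Icc (hmn : m ≤ n)
    (hp : ∀ i, m ≤ i → i < n → p (i + 1) ≤ p i) (hbot : StrictAntiOn f (Iic (p n)))
    (hpiece : ∀ i, m ≤ i → i < n → StrictAntiOn f (Icc (p (i + 1)) (p i))) :
    StrictAntiOn f (Iic (p m)) := by
  induction n, hmn using Nat.le_induction with
  | base => exact hbot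
  | succ n hmn ih =>
    have hle := hp n hmn n.lt_succ_self
    have hunion := hbot.union (hpiece n hmn n.lt_succ_self) isGreatest_Iic (isLeast_Icc hle)
    rw [Iic_union_Icc_eq_Iic hle] at hunion
    exact ih (fun i hi hin => hp i hi (by omega)) hunion fun i hi hin => hpiece i hi (by omega)

theorem le_and_eq_iff_mem_Icc_of_strictAntiOn_of_strictMonoOn {γ : Type*} [PartialOrder γ]
    {G : α → γ} {a b : α} (hab : a ≤ b) (hanti : StrictAntiOn G (Iic a))
    (hflat : ∀ y ∈ Icc a b, G y = G a) (hmono : StrictMonoOn G (Ici b)) (y : α) :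
    G a ≤ G y ∧ (G y = G a ↔ y ∈ Icc a b) := by
  rcases lt_or_ge y a with hya | hay
  · have hlt : G a < G y := hanti (mem_Iic.2 hya.le) self_mem_Iic hya
    exact ⟨hlt.le, iff_of_false hlt.ne' fun hy => hya.not_ge hy.1⟩
  rcases le_or_gt y b with hyb | hby
  · have heq := hflat y ⟨hay, hyb⟩
    exact ⟨heq.ge, iff_of_true heq ⟨hay, hyb⟩⟩
  · have hlt : G a < G y := hflat b ⟨hab, le_rfl⟩ ▸ hmono self_mem_Ici (mem_Ici.2 hby.le) hby
    exact ⟨hlt.le, iff_of_false hlt.ne' fun hy => hby.not_ge hy.2⟩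

end Pieces

section Slopes

variable {F : ℝ → ℝ} {α cs : ℕ → ℝ} {k j : ℕ}

theorem strictMonoOn_sub_mul_Ici_of_slopes (hF : Continuous F)
    (hα : ∀ i, 1 ≤ i → i < j → α (i + 1) ≤ α i) (hcs : ∀ i, i < j → cs (i + 1) < cs i)
    (htop : ∀ y, α 1 < y → HasDerivAt F (cs 0) y)
    (hmid : ∀ i, 1 ≤ i → i < j → ∀ y, α (i + 1) < y → y < α i → HasDerivAt F (cs i) y)
    (hj : 1 ≤ j) : StrictMonoOn (fun y => F y - y * cs j) (Ici (α j)) := by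
  have hcs' : StrictAntiOn cs (Iic j) := strictAntiOn_Iic_of_succ_lt hcs
  have hG : Continuous fun y => F y - y * cs j := by fun_prop
  refine strictMonoOn_Ici_of_strictMonoOn_Icc hj hα ?_ fun i hi hij => ?_
  · refine strictMonoOn_of_hasDerivWithinAt_pos (convex_Ici _) hG.continuousOn
      (f' := fun _ => cs 0 - cs j) (fun y hy => ?_) fun _ _ => ?_
    · rw [interior_Ici] at hy ⊢
      exact ((htop y hy).sub (hasDerivAt_mul_const _)).hasDerivWithinAt
    · exact sub_pos.2 (hcs' (mem_Iic.2 j.zero_le) self_mem_Iic (by omega))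
  · refine strictMonoOn_of_hasDerivWithinAt_pos (convex_Icc _ _) hG.continuousOn
      (f' := fun _ => cs i - cs j) (fun y hy => ?_) fun _ _ => ?_
    · rw [interior_Icc] at hy ⊢
      exact ((hmid i hi hij y hy.1 hy.2).sub (hasDerivAt_mul_const _)).hasDerivWithinAt
    · exact sub_pos.2 (hcs' (mem_Iic.2 hij.le) self_mem_Iic hij)

theorem strictAntiOn_sub_mul_Iic_of_slopes (hF : Continuous F)
    (hα : ∀ i, j + 1 ≤ i → i < k → α (i + 1) ≤ α i) (hcs : ∀ i, i < k → cs (i + 1) < cs i)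
    (hmid : ∀ i, j + 1 ≤ i → i < k → ∀ y, α (i + 1) < y → y < α i → HasDerivAt F (cs i) y)
    (hbot : ∀ y, y < α k → HasDerivAt F (cs k) y)
    (hjk : j < k) : StrictAntiOn (fun y => F y - y * cs j) (Iic (α (j + 1))) := by
  have hcs' : StrictAntiOn cs (Iic k) := strictAntiOn_Iic_of_succ_lt hcs
  have hG : Continuous fun y => F y - y * cs j := by fun_prop
  refine strictAntiOn_Iic_of_strictAntiOn_Icc hjk hα ?_ fun i hi hik => ?_
  · refine strictAntiOn_of_hasDerivWithinAt_neg (convex_Iic _) hG.continuousOn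
      (f' := fun _ => cs k - cs j) (fun y hy => ?_) fun _ _ => ?_
    · rw [interior_Iic] at hy ⊢
      exact ((hbot y hy).sub (hasDerivAt_mul_const _)).hasDerivWithinAt
    · exact sub_neg.2 (hcs' (mem_Iic.2 hjk.le) self_mem_Iic hjk)
  · refine strictAntiOn_of_hasDerivWithinAt_neg (convex_Icc _ _) hG.continuousOn
      (f' := fun _ => cs i - cs j) (fun y hy => ?_) fun _ _ => ?_
    · rw [interior_Icc] at hy ⊢
      exact ((hmid i hi hik y hy.1 hy.2).sub (hasDerivAt_mul_const _)).hasDerivWithinAt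
    · exact sub_neg.2 (hcs' (mem_Iic.2 (by omega)) (mem_Iic.2 hik.le) (by omega))

theorem sub_mul_eq_of_hasDerivAt_Ioo {a b c : ℝ} (hF : ContinuousOn F (Icc a b))
    (hd : ∀ y ∈ Ioo a b, HasDerivAt F c y) : ∀ y ∈ Icc a b, F y - y * c = F a - a * c := by
  have hG : ContinuousOn (fun y => F y - y * c) (Icc a b) := by fun_prop
  have hG' : ∀ y ∈ interior (Icc a b), HasDerivWithinAt (fun y => F y - y * c) 0
      (interior (Icc a b)) y := fun y hy => by
    rw [interior_Icc] at hy ⊢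
    have hGd := (hd y hy).sub (hasDerivAt_mul_const c)
    rw [sub_self] at hGd
    exact hGd.hasDerivWithinAt
  intro y hy
  have ha : a ∈ Icc a b := left_mem_Icc.2 (hy.1.trans hy.2)
  exact le_antisymm
    (antitoneOn_of_hasDerivWithinAt_nonpos (convex_Icc a b) hG hG' (fun _ _ => le_rfl) ha hy hy.1)
    (monotoneOn_of_hasDerivWithinAt_nonneg (convex_Icc a b) hG hG' (fun _ _ => le_rfl) ha hy hy.1)

theorem add_mul_sub_le_and_eq_iff_of_slopes (hF : Continuous F)
    (hα : ∀ i, 1 ≤ i → i < k → α (i + 1) ≤ α i) (hcs : ∀ i, i < k → cs (i + 1) < cs i)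
    (htop : ∀ y, α 1 < y → HasDerivAt F (cs 0) y)
    (hmid : ∀ i, 1 ≤ i → i < k → ∀ y, α (i + 1) < y → y < α i → HasDerivAt F (cs i) y)
    (hbot : ∀ y, y < α k → HasDerivAt F (cs k) y) (hj : 1 ≤ j) (hjk : j < k) (y : ℝ) :
    F (α (j + 1)) + cs j * (y - α (j + 1)) ≤ F y ∧
      (F (α (j + 1)) + cs j * (y - α (j + 1)) = F y ↔ y ∈ Icc (α (j + 1)) (α j)) := by
  have hvalley := le_and_eq_iff_mem_Icc_of_strictAntiOn_of_strictMonoOn (hα j hj hjk)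
    (strictAntiOn_sub_mul_Iic_of_slopes hF (fun i hi hik => hα i (by omega) hik) hcs
      (fun i hi hik => hmid i (by omega) hik) hbot hjk)
    (sub_mul_eq_of_hasDerivAt_Ioo hF.continuousOn fun y hy => hmid j hj hjk y hy.1 hy.2)
    (strictMonoOn_sub_mul_Ici_of_slopes hF (fun i hi hij => hα i hi (by omega))
      (fun i hij => hcs i (by omega)) htop (fun i hi hij => hmid i hi (by omega)) hj) y
  constructor
  · linarith [hvalley.1]
  · rw [← hvalley.2]
    constructor <;> intro h <;> linarith

end Slopes

section SupportingLine

variable {b q c : ℝ} {U : ℝ → ℝ → ℝ} {g h : ℝ → ℝ}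

theorem ContinuousOn.uncurry_comp_graph (hU : Continuous (Function.uncurry U))
    (hh : ContinuousOn h (Icc b q)) : ContinuousOn (fun x => U (h x) x) (Icc b q) :=
  hU.comp_continuousOn (hh.prodMk continuousOn_id)

theorem integral_add_mul_sub_eq (hbq : b ≤ q) (hU : Continuous (Function.uncurry U))
    (hg : ContinuousOn g (Icc b q)) (hh : ContinuousOn h (Icc b q)) :
    ∫ x in b..q, (U (g x) x + c * (h x - g x)) =
      (∫ x in b..q, U (g x) x) + c * ((∫ x in b..q, h x) - ∫ x in b..q, g x) := by
  have hUg := (hg.uncurry_comp_graph hU).intervalIntegrable_of_Icc (μ := volume) hbq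
  have hgi := hg.intervalIntegrable_of_Icc (μ := volume) hbq
  have hhi := hh.intervalIntegrable_of_Icc (μ := volume) hbq
  rw [integral_add hUg ((hhi.sub hgi).const_mul c), intervalIntegral.integral_const_mul,
    integral_sub hhi hgi]

theorem integral_add_mul_sub_le (hbq : b ≤ q) (hU : Continuous (Function.uncurry U))
    (hg : ContinuousOn g (Icc b q)) (hh : ContinuousOn h (Icc b q))
    (hle : ∀ x ∈ Icc b q, U (g x) x + c * (h x - g x) ≤ U (h x) x) :
    (∫ x in b..q, U (g x) x) + c * ((∫ x in b..q, h x) - ∫ x in b..q, g x) ≤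
      ∫ x in b..q, U (h x) x := by
  rw [← integral_add_mul_sub_eq hbq hU hg hh]
  exact integral_mono_on (μ := volume) hbq
    (((hg.uncurry_comp_graph hU).add ((hh.sub hg).const_smul c)).intervalIntegrable_of_Icc hbq)
    ((hh.uncurry_comp_graph hU).intervalIntegrable_of_Icc hbq) hle

theorem integral_eq_add_mul_sub_iff (hbq : b < q) (hU : Continuous (Function.uncurry U))
    (hg : ContinuousOn g (Icc b q)) (hh : ContinuousOn h (Icc b q))
    (hle : ∀ x ∈ Icc b q, U (g x) x + c * (h x - g x) ≤ U (h x) x) :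
    (∫ x in b..q, U (h x) x) =
        (∫ x in b..q, U (g x) x) + c * ((∫ x in b..q, h x) - ∫ x in b..q, g x) ↔
      ∀ x ∈ Icc b q, U (g x) x + c * (h x - g x) = U (h x) x := by
  rw [← integral_add_mul_sub_eq hbq.le hU hg hh]
  constructor
  · intro heq x hx
    by_contra hne
    exact (integral_lt_integral_of_continuousOn_of_le_of_exists_lt hbq
      ((hg.uncurry_comp_graph hU).add ((hh.sub hg).const_smul c)) (hh.uncurry_comp_graph hU)
      (fun x hx => hle x (Ioc_subset_Icc_self hx)) ⟨x, hx, (hle x hx).lt_of_ne hne⟩).ne' heq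
  · intro heq
    exact (integral_congr fun x hx => heq x (uIcc_of_le hbq.le ▸ hx)).symm

end SupportingLine

theorem stmt_9_general (b q : ℝ) (hbq : b < q) (k : ℕ)
    (a : ℕ → ℝ → ℝ) (cs : ℕ → ℝ)
    (U : ℝ → ℝ → ℝ)
    (hUcont : Continuous (fun p : ℝ × ℝ => U p.1 p.2))
    (hacont : ∀ i, 1 ≤ i → i ≤ k → ContinuousOn (a i) (Set.Icc b q))
    (hamono : ∀ i, 1 ≤ i → i < k → ∀ x ∈ Set.Icc b q, a (i + 1) x ≤ a i x)
    (hcs : ∀ i, i < k → cs (i + 1) < cs i)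
    (hslope_top : ∀ x ∈ Set.Icc b q, ∀ h : ℝ, 1 ≤ k → a 1 x < h →
      HasDerivAt (fun y => U y x) (cs 0) h)
    (hslope_mid : ∀ i, 1 ≤ i → i < k → ∀ x ∈ Set.Icc b q, ∀ h : ℝ,
      a (i + 1) x < h → h < a i x → HasDerivAt (fun y => U y x) (cs i) h)
    (hslope_bot : ∀ x ∈ Set.Icc b q, ∀ h : ℝ, 1 ≤ k → h < a k x →
      HasDerivAt (fun y => U y x) (cs k) h)
    (A : ℝ) (j : ℕ) (hj1 : 1 ≤ j) (hjk : j < k) :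
    (∀ h : ℝ → ℝ, ContinuousOn h (Set.Icc b q) → (∫ x in b..q, h x) = A →
      ((∫ x in b..q, U (h x) x)
          = (∫ x in b..q, U (a (j + 1) x) x) + cs j * (A - ∫ x in b..q, a (j + 1) x)
        ↔ ∀ x ∈ Set.Icc b q, a (j + 1) x ≤ h x ∧ h x ≤ a j x)) ∧
    (∀ h : ℝ → ℝ, ContinuousOn h (Set.Icc b q) → (∫ x in b..q, h x) = A →
      (∫ x in b..q, U (a (j + 1) x) x) + cs j * (A - ∫ x in b..q, a (j + 1) x)
        ≤ ∫ x in b..q, U (h x) x) := by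
  have hsupport : ∀ x ∈ Icc b q, ∀ y,
      U (a (j + 1) x) x + cs j * (y - a (j + 1) x) ≤ U y x ∧
        (U (a (j + 1) x) x + cs j * (y - a (j + 1) x) = U y x ↔
          y ∈ Icc (a (j + 1) x) (a j x)) := fun x hx =>
    add_mul_sub_le_and_eq_iff_of_slopes (F := fun y => U y x) (α := fun i => a i x) (by fun_prop)
      (fun i hi hik => hamono i hi hik x hx) hcs (fun y => hslope_top x hx y (by omega))
      (fun i hi hik => hslope_mid i hi hik x hx) (fun y => hslope_bot x hx y (by omega)) hj1 hjk
  have ha := hacont (j + 1) (by omega) (by omega)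
  refine ⟨fun h hh hA => ?_, fun h hh hA => ?_⟩
  · rw [← hA, integral_eq_add_mul_sub_iff hbq hUcont ha hh fun x hx => (hsupport x hx (h x)).1]
    exact forall₂_congr fun x hx => (hsupport x hx (h x)).2
  · rw [← hA]
    exact integral_add_mul_sub_le hbq.le hUcont ha hh fun x hx => (hsupport x hx (h x)).1

/-- Optimality part of the strip theorem. The interval is `[b, q]`, the ordered curves are
`a 1 ≥ a 2 ≥ ... ≥ a k` (with `a 0 = +∞`, `a (k+1) = -∞` understood as absence of a bound),
and `cs 0 > cs 1 > ... > cs k` are the slopes of the convex piecewise-linear potential `U`. -/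
theorem stmt_9 (b q : ℝ) (hbq : b < q) (k : ℕ)
    (a : ℕ → ℝ → ℝ) (cs : ℕ → ℝ)
    (U : ℝ → ℝ → ℝ)
    (hUcont : Continuous (fun p : ℝ × ℝ => U p.1 p.2))
    (hacont : ∀ i, 1 ≤ i → i ≤ k → ContinuousOn (a i) (Set.Icc b q))
    (hamono : ∀ i, 1 ≤ i → i < k → ∀ x ∈ Set.Icc b q, a (i + 1) x ≤ a i x)
    (hcs : ∀ i, i < k → cs (i + 1) < cs i)
    (hslope_top : ∀ x ∈ Set.Icc b q, ∀ h : ℝ, 1 ≤ k → a 1 x < h →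
      HasDerivAt (fun y => U y x) (cs 0) h)
    (hslope_mid : ∀ i, 1 ≤ i → i < k → ∀ x ∈ Set.Icc b q, ∀ h : ℝ,
      a (i + 1) x < h → h < a i x → HasDerivAt (fun y => U y x) (cs i) h)
    (hslope_bot : ∀ x ∈ Set.Icc b q, ∀ h : ℝ, 1 ≤ k → h < a k x →
      HasDerivAt (fun y => U y x) (cs k) h)
    (A : ℝ) (j : ℕ) (hj1 : 1 ≤ j) (hjk : j < k)
    (hA1 : (∫ x in b..q, a (j + 1) x) ≤ A) (hA2 : A ≤ ∫ x in b..q, a j x) :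
    (∀ h : ℝ → ℝ, ContinuousOn h (Set.Icc b q) → (∫ x in b..q, h x) = A →
      ((∫ x in b..q, U (h x) x)
          = (∫ x in b..q, U (a (j + 1) x) x) + cs j * (A - ∫ x in b..q, a (j + 1) x)
        ↔ ∀ x ∈ Set.Icc b q, a (j + 1) x ≤ h x ∧ h x ≤ a j x)) ∧
    (∀ h : ℝ → ℝ, ContinuousOn h (Set.Icc b q) → (∫ x in b..q, h x) = A →
      (∫ x in b..q, U (a (j + 1) x) x) + cs j * (A - ∫ x in b..q, a (j + 1) x)
        ≤ ∫ x in b..q, U (h x) x) :=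
  stmt_9_general b q hbq k a cs U hUcont hacont hamono hcs hslope_top hslope_mid hslope_bot A j hj1
    hjk
end

section
/- Let t₁,...,t_K ∈ C[−T,T], A ∈ ℝ, and let a_j denote the pointwise j-th largest of the t_i. Among all continuous v on [−T,T] with ∫_{−T}^T v = A, the functional I[v] = ∫_{−T}^T Σ_{i=1}^K |t_i(x) − v(x)| dx attains its infimum, and every minimizer v satisfies a_{j+1}(x) ≤ v(x) ≤ a_j(x) for all x, where j is chosen so that ∫_{−T}^T a_{j+1} ≤ A ≤ ∫_{−T}^T a_j (with a₀=+∞, a_{K+1}=−∞). -/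
/-!
With the multiplier `c = 2j - K`, the pointwise Lagrangian
`penalizedDeviation (t · x) j y = ∑ i, |t i x - y| + c * y` is minimised by every `y` in the
strip `a (j+1) x ≤ y ≤ a j x` and grows with slope at least `2` outside it. This is pure
counting: at least `K - j` of the `t i x` lie at or below each point of the strip and at least `j`
at or above it. Because `∫ c * v = c * A` for every admissible `v`, minimising `I` is the same as
minimising the integral of the Lagrangian. The order curves are continuous, so by the
intermediate value theorem some continuous `v` with `∫ v = A` runs inside the strip, and it
minimises. Any other minimiser has the same integral of the Lagrangian, so by continuity it
attains the pointwise minimum everywhere, which forces it into the strip.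
-/

open Finset Filter Topology

section PenalizedDeviation

variable {ι : Type*} [Fintype ι] (u : ι → ℝ) {s y : ℝ} {j m : ℕ}

theorem sum_abs_sub_add_le_of_le (hm : m ≤ #{i | u i ≤ s}) (hsy : s ≤ y) :
    ∑ i, |u i - s| + (2 * m - Fintype.card ι) * (y - s) ≤ ∑ i, |u i - y| := by
  have hstep : ∀ i, |u i - s| + (if u i ≤ s then y - s else -(y - s)) ≤ |u i - y| := by
    intro i
    split_ifs with h
    · rw [abs_of_nonpos (by linarith), abs_of_nonpos (by linarith)]
      linarith
    · linarith [abs_sub_le (u i) y s, abs_of_nonneg (sub_nonneg.2 hsy)]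
  have hsplit : ∑ i, (if u i ≤ s then y - s else -(y - s))
      = (2 * #{i | u i ≤ s} - Fintype.card ι) * (y - s) := by
    rw [sum_ite, sum_const, sum_const, ← card_univ,
      ← card_filter_add_card_filter_not (s := univ) (fun i => u i ≤ s)]
    simp only [nsmul_eq_mul]
    push_cast
    ring
  have hm' : (m : ℝ) ≤ #{i | u i ≤ s} := by exact_mod_cast hm
  have := sum_le_sum fun i (_ : i ∈ univ) => hstep i
  rw [sum_add_distrib, hsplit] at this
  nlinarith

theorem sum_abs_sub_add_le_of_ge (hm : m ≤ #{i | s ≤ u i}) (hys : y ≤ s) :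
    ∑ i, |u i - s| + (2 * m - Fintype.card ι) * (s - y) ≤ ∑ i, |u i - y| := by
  have hneg := sum_abs_sub_add_le_of_le (fun i => -u i) (s := -s) (y := -y) (m := m)
    (by simpa only [neg_le_neg_iff] using hm) (neg_le_neg hys)
  simp only [sub_neg_eq_add, neg_add_eq_sub] at hneg
  simpa only [abs_sub_comm _ (u _)] using hneg

def penalizedDeviation (j : ℕ) (y : ℝ) : ℝ :=
  ∑ i, |u i - y| + (2 * j - Fintype.card ι) * y

theorem penalizedDeviation_add_le_of_le (hm : m ≤ #{i | u i ≤ s}) (hsy : s ≤ y) :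
    penalizedDeviation u j s + 2 * (m + j - Fintype.card ι) * (y - s)
      ≤ penalizedDeviation u j y := by
  unfold penalizedDeviation
  linear_combination sum_abs_sub_add_le_of_le u hm hsy

theorem penalizedDeviation_add_le_of_ge (hm : m ≤ #{i | s ≤ u i}) (hys : y ≤ s) :
    penalizedDeviation u j s + 2 * (m - j) * (s - y) ≤ penalizedDeviation u j y := by
  unfold penalizedDeviation
  linear_combination sum_abs_sub_add_le_of_ge u hm hys

theorem penalizedDeviation_le (hle : Fintype.card ι ≤ #{i | u i ≤ s} + j)
    (hge : j ≤ #{i | s ≤ u i}) (y : ℝ) :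
    penalizedDeviation u j s ≤ penalizedDeviation u j y := by
  rcases le_total s y with hsy | hys
  · have hcoef : (Fintype.card ι : ℝ) ≤ #{i | u i ≤ s} + j := by exact_mod_cast hle
    have := penalizedDeviation_add_le_of_le u (j := j) le_rfl hsy
    nlinarith
  · have hcoef : (j : ℝ) ≤ #{i | s ≤ u i} := by exact_mod_cast hge
    have := penalizedDeviation_add_le_of_ge u (j := j) le_rfl hys
    nlinarith

theorem penalizedDeviation_lt_of_lt (hle : Fintype.card ι + 1 ≤ #{i | u i ≤ s} + j)
    (hsy : s < y) : penalizedDeviation u j s < penalizedDeviation u j y := by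
  have hcoef : (Fintype.card ι : ℝ) + 1 ≤ #{i | u i ≤ s} + j := by exact_mod_cast hle
  have := penalizedDeviation_add_le_of_le u (j := j) le_rfl hsy.le
  nlinarith

theorem penalizedDeviation_lt_of_gt (hge : j + 1 ≤ #{i | s ≤ u i}) (hys : y < s) :
    penalizedDeviation u j s < penalizedDeviation u j y := by
  have hcoef : (j : ℝ) + 1 ≤ #{i | s ≤ u i} := by exact_mod_cast hge
  have := penalizedDeviation_add_le_of_ge u (j := j) le_rfl hys.le
  nlinarith

end PenalizedDeviation

def IsDecreasingRearrangement {K : ℕ} (u : Fin K → ℝ) (α : ℕ → ℝ) : Prop :=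
  Multiset.map α (Icc 1 K).val = Multiset.map u univ.val ∧ AntitoneOn α (Set.Icc 1 K)

namespace IsDecreasingRearrangement

variable {K : ℕ} {u : Fin K → ℝ} {α : ℕ → ℝ} {r : ℕ}

theorem of_succ_le (hmap : Multiset.map α (Icc 1 K).val = Multiset.map u univ.val)
    (hsucc : ∀ k, 1 ≤ k → k < K → α (k + 1) ≤ α k) : IsDecreasingRearrangement u α :=
  ⟨hmap, antitoneOn_of_add_one_le Set.ordConnected_Icc fun k _ hk hk₁ =>
    hsucc k hk.1 (Nat.lt_of_succ_le hk₁.2)⟩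

theorem card_filter_comp (h : IsDecreasingRearrangement u α) (p : ℝ → Prop) [DecidablePred p] :
    #{i | p (u i)} = #{k ∈ Icc 1 K | p (α k)} := by
  have := congrArg (Multiset.countP p) h.1
  rw [Multiset.countP_map, Multiset.countP_map] at this
  simpa [Finset.card, Finset.filter_val] using this.symm

theorem le_card_filter_ge (h : IsDecreasingRearrangement u α) (hr : 1 ≤ r) (hrK : r ≤ K) :
    r ≤ #{i | α r ≤ u i} := by
  rw [h.card_filter_comp (α r ≤ ·)]
  calc r = #(Icc 1 r) := by simp
    _ ≤ _ := card_le_card fun k hk => by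
      rw [mem_Icc] at hk
      rw [mem_filter, mem_Icc]
      exact ⟨⟨hk.1, hk.2.trans hrK⟩, h.2 ⟨hk.1, hk.2.trans hrK⟩ ⟨hr, hrK⟩ hk.2⟩

theorem le_card_filter_le (h : IsDecreasingRearrangement u α) (hr : 1 ≤ r) (hrK : r ≤ K) :
    K + 1 ≤ #{i | u i ≤ α r} + r := by
  rw [h.card_filter_comp (· ≤ α r)]
  have : #(Icc r K) ≤ #{k ∈ Icc 1 K | α k ≤ α r} := card_le_card fun k hk => by
    rw [mem_Icc] at hk
    rw [mem_filter, mem_Icc]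
    exact ⟨⟨hr.trans hk.1, hk.2⟩, h.2 ⟨hr, hrK⟩ ⟨hr.trans hk.1, hk.2⟩ hk.1⟩
  simp only [Nat.card_Icc] at this
  omega

variable {s : ℝ} {j : ℕ}

theorem card_le_card_filter_le_add (h : IsDecreasingRearrangement u α) (hjK : j ≤ K)
    (hs : j < K → α (j + 1) ≤ s) : K ≤ #{i | u i ≤ s} + j := by
  rcases hjK.lt_or_eq with hj | rfl
  · have hcount := h.le_card_filter_le (r := j + 1) (by omega) hj
    have hsub : #{i | u i ≤ α (j + 1)} ≤ #{i | u i ≤ s} :=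
      card_le_card (monotone_filter_right _ fun i _ hi => hi.trans (hs hj))
    omega
  · omega

theorem le_card_filter_ge_of_le (h : IsDecreasingRearrangement u α) (hjK : j ≤ K)
    (hs : 1 ≤ j → s ≤ α j) : j ≤ #{i | s ≤ u i} := by
  rcases Nat.eq_zero_or_pos j with rfl | hj
  · exact Nat.zero_le _
  · exact (h.le_card_filter_ge hj hjK).trans
      (card_le_card (monotone_filter_right _ fun i _ hi => (hs hj).trans hi))

theorem penalizedDeviation_le (h : IsDecreasingRearrangement u α) (hjK : j ≤ K)
    (hs₁ : j < K → α (j + 1) ≤ s) (hs₂ : 1 ≤ j → s ≤ α j) (y : ℝ) :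
    penalizedDeviation u j s ≤ penalizedDeviation u j y :=
  _root_.penalizedDeviation_le u (by simpa using h.card_le_card_filter_le_add hjK hs₁)
    (h.le_card_filter_ge_of_le hjK hs₂) y

theorem penalizedDeviation_lt_of_lt {y : ℝ} (h : IsDecreasingRearrangement u α) (hj : 1 ≤ j)
    (hjK : j ≤ K) (hy : α j < y) : penalizedDeviation u j (α j) < penalizedDeviation u j y :=
  _root_.penalizedDeviation_lt_of_lt u (by simpa using h.le_card_filter_le hj hjK) hy

theorem penalizedDeviation_lt_of_gt {y : ℝ} (h : IsDecreasingRearrangement u α) (hjK : j < K)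
    (hy : y < α (j + 1)) : penalizedDeviation u j (α (j + 1)) < penalizedDeviation u j y :=
  _root_.penalizedDeviation_lt_of_gt u (h.le_card_filter_ge (by omega) hjK) hy

end IsDecreasingRearrangement

theorem card_filter_add_card_filter_le {ι : Type*} [Fintype ι] {p q : ι → Prop}
    [DecidablePred p] [DecidablePred q] (h : ∀ i, p i → ¬q i) :
    #{i | p i} + #{i | q i} ≤ Fintype.card ι := by
  rw [← card_univ, ← card_filter_add_card_filter_not (s := univ) p]
  gcongr with i
  exact fun hq hp => h i hp hq

/-- The two counts say that `g x` is the `r`-th largest of the values `f i x`. -/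
theorem continuousOn_of_card_filter_le_of_card_filter_ge {ι X : Type*} [Fintype ι]
    [TopologicalSpace X] {S : Set X} {f : ι → X → ℝ} {g : X → ℝ} {r : ℕ}
    (hf : ∀ i, ContinuousOn (f i) S)
    (hle : ∀ x ∈ S, Fintype.card ι + 1 ≤ #{i | f i x ≤ g x} + r)
    (hge : ∀ x ∈ S, r ≤ #{i | g x ≤ f i x}) : ContinuousOn g S := by
  intro x₀ hx₀
  rw [ContinuousWithinAt, tendsto_order]
  constructor
  · intro c hc
    have hnear : ∀ᶠ x in 𝓝[S] x₀, ∀ i, c < f i x₀ → c < f i x :=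
      eventually_all.2 fun i => by
        by_cases hi : c < f i x₀
        · exact ((hf i x₀ hx₀).eventually_const_lt hi).mono fun x hx _ => hx
        · exact Eventually.of_forall fun x h => absurd h hi
    filter_upwards [hnear, self_mem_nhdsWithin] with x hx hxS
    by_contra! hgx
    have := card_filter_add_card_filter_le (p := fun i => g x₀ ≤ f i x₀) (q := fun i => f i x ≤ g x)
      fun i hi => not_le.2 (hgx.trans_lt (hx i (hc.trans_le hi)))
    have := hle x hxS
    have := hge x₀ hx₀
    omega
  · intro c hc
    have hnear : ∀ᶠ x in 𝓝[S] x₀, ∀ i, f i x₀ < c → f i x < c :=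
      eventually_all.2 fun i => by
        by_cases hi : f i x₀ < c
        · exact ((hf i x₀ hx₀).eventually_lt_const hi).mono fun x hx _ => hx
        · exact Eventually.of_forall fun x h => absurd h hi
    filter_upwards [hnear, self_mem_nhdsWithin] with x hx hxS
    by_contra! hgx
    have := card_filter_add_card_filter_le (p := fun i => f i x₀ ≤ g x₀) (q := fun i => g x ≤ f i x)
      fun i hi => not_le.2 ((hx i (hi.trans_lt hc)).trans_le hgx)
    have := hle x₀ hx₀
    have := hge x hxS
    omega

theorem _root_.IsDecreasingRearrangement.continuousOn {X : Type*} [TopologicalSpace X]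
    {S : Set X} {K r : ℕ} {f : Fin K → X → ℝ} {g : ℕ → X → ℝ}
    (hf : ∀ i, ContinuousOn (f i) S) (h : ∀ x ∈ S, IsDecreasingRearrangement (f · x) (g · x))
    (hr : 1 ≤ r) (hrK : r ≤ K) : ContinuousOn (g r) S :=
  continuousOn_of_card_filter_le_of_card_filter_ge hf
    (fun x hx => by simpa using (h x hx).le_card_filter_le hr hrK)
    (fun x hx => (h x hx).le_card_filter_ge hr hrK)

section Integral

open Set intervalIntegral

variable {a b c A : ℝ} {F G v w lo hi : ℝ → ℝ}

theorem integral_add_const_mul (hab : a ≤ b) (hF : ContinuousOn F (Icc a b))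
    (hv : ContinuousOn v (Icc a b)) :
    ∫ x in a..b, (F x + c * v x) = (∫ x in a..b, F x) + c * ∫ x in a..b, v x := by
  have hcv : ContinuousOn (fun x => c * v x) (Icc a b) := by fun_prop
  rw [integral_add (hF.intervalIntegrable_of_Icc hab) (hcv.intervalIntegrable_of_Icc hab),
    integral_const_mul]

theorem integral_le_integral_of_add_const_mul_le (hab : a ≤ b) (hF : ContinuousOn F (Icc a b))
    (hG : ContinuousOn G (Icc a b)) (hv : ContinuousOn v (Icc a b))
    (hw : ContinuousOn w (Icc a b)) (hvw : ∫ x in a..b, v x = ∫ x in a..b, w x)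
    (h : ∀ x ∈ Icc a b, F x + c * v x ≤ G x + c * w x) :
    ∫ x in a..b, F x ≤ ∫ x in a..b, G x := by
  have hFv : ContinuousOn (fun x => F x + c * v x) (Icc a b) := by fun_prop
  have hGw : ContinuousOn (fun x => G x + c * w x) (Icc a b) := by fun_prop
  have hint := integral_mono_on (μ := MeasureTheory.volume) hab
    (hFv.intervalIntegrable_of_Icc hab) (hGw.intervalIntegrable_of_Icc hab) h
  rw [integral_add_const_mul hab hF hv, integral_add_const_mul hab hG hw, hvw] at hint
  linarith

theorem add_const_mul_eq_of_integral_le (hab : a < b) (hF : ContinuousOn F (Icc a b))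
    (hG : ContinuousOn G (Icc a b)) (hv : ContinuousOn v (Icc a b))
    (hw : ContinuousOn w (Icc a b)) (hvw : ∫ x in a..b, v x = ∫ x in a..b, w x)
    (h : ∀ x ∈ Icc a b, F x + c * v x ≤ G x + c * w x)
    (hGF : ∫ x in a..b, G x ≤ ∫ x in a..b, F x) :
    ∀ x ∈ Icc a b, F x + c * v x = G x + c * w x := by
  by_contra! hne
  obtain ⟨x, hx, hxne⟩ := hne
  have hFv : ContinuousOn (fun x => F x + c * v x) (Icc a b) := by fun_prop
  have hGw : ContinuousOn (fun x => G x + c * w x) (Icc a b) := by fun_prop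
  have hlt := integral_lt_integral_of_continuousOn_of_le_of_exists_lt hab hFv hGw
    (fun x hx => h x (Ioc_subset_Icc_self hx)) ⟨x, hx, (h x hx).lt_of_ne hxne⟩
  rw [integral_add_const_mul hab.le hF hv, integral_add_const_mul hab.le hG hw, hvw] at hlt
  linarith

theorem integral_add_const_eq (hab : a < b) (hF : ContinuousOn F (Icc a b)) :
    ∫ x in a..b, (F x + (A - ∫ y in a..b, F y) / (b - a)) = A := by
  rw [integral_add (hF.intervalIntegrable_of_Icc hab.le) intervalIntegrable_const,
    integral_const, smul_eq_mul]
  field_simp [(sub_pos.2 hab).ne']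
  ring

theorem exists_continuousOn_integral_eq_of_le (hab : a ≤ b) (hlo : ContinuousOn lo (Icc a b))
    (hhi : ContinuousOn hi (Icc a b)) (hle : ∀ x ∈ Icc a b, lo x ≤ hi x)
    (hA₁ : ∫ x in a..b, lo x ≤ A) (hA₂ : A ≤ ∫ x in a..b, hi x) :
    ∃ v, ContinuousOn v (Icc a b) ∧ ∫ x in a..b, v x = A ∧
      ∀ x ∈ Icc a b, lo x ≤ v x ∧ v x ≤ hi x := by
  set I := ∫ x in a..b, lo x
  set J := ∫ x in a..b, hi x
  obtain ⟨θ, hθ, hθA⟩ : A ∈ (fun θ => I + θ * (J - I)) '' Icc 0 1 :=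
    intermediate_value_Icc zero_le_one (by fun_prop) ⟨by simpa using hA₁, by simpa using hA₂⟩
  have hdiff : ContinuousOn (fun x => hi x - lo x) (Icc a b) := hhi.sub hlo
  refine ⟨fun x => lo x + θ * (hi x - lo x), hlo.add (continuousOn_const.mul hdiff), ?_,
    fun x hx => ⟨?_, ?_⟩⟩
  · rw [integral_add_const_mul hab hlo hdiff, integral_sub (hhi.intervalIntegrable_of_Icc hab)
      (hlo.intervalIntegrable_of_Icc hab)]
    exact hθA
  · nlinarith [hle x hx, hθ.1]
  · nlinarith [hle x hx, hθ.2]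

theorem exists_continuousOn_integral_eq_between {p q : Prop} (hab : a < b)
    (hlo : p → ContinuousOn lo (Icc a b)) (hhi : q → ContinuousOn hi (Icc a b))
    (hle : p → q → ∀ x ∈ Icc a b, lo x ≤ hi x)
    (hA₁ : p → ∫ x in a..b, lo x ≤ A) (hA₂ : q → A ≤ ∫ x in a..b, hi x) :
    ∃ v, ContinuousOn v (Icc a b) ∧ ∫ x in a..b, v x = A ∧
      ∀ x ∈ Icc a b, (p → lo x ≤ v x) ∧ (q → v x ≤ hi x) := by
  have hba : 0 < b - a := sub_pos.2 hab
  by_cases hp : p <;> by_cases hq : q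
  · obtain ⟨v, hv, hvA, hvb⟩ := exists_continuousOn_integral_eq_of_le hab.le (hlo hp) (hhi hq)
      (hle hp hq) (hA₁ hp) (hA₂ hq)
    exact ⟨v, hv, hvA, fun x hx => ⟨fun _ => (hvb x hx).1, fun _ => (hvb x hx).2⟩⟩
  · refine ⟨_, (hlo hp).add continuousOn_const, integral_add_const_eq hab (hlo hp),
      fun x _ => ⟨fun _ => ?_, fun h => absurd h hq⟩⟩
    exact le_add_of_nonneg_right (div_nonneg (sub_nonneg.2 (hA₁ hp)) hba.le)
  · refine ⟨_, (hhi hq).add continuousOn_const, integral_add_const_eq hab (hhi hq),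
      fun x _ => ⟨fun h => absurd h hp, fun _ => ?_⟩⟩
    exact add_le_of_nonpos_right (div_nonpos_of_nonpos_of_nonneg (sub_nonpos.2 (hA₂ hq)) hba.le)
  · exact ⟨_, continuousOn_const.add continuousOn_const,
      integral_add_const_eq (F := fun _ => 0) hab continuousOn_const,
      fun x _ => ⟨fun h => absurd h hp, fun h => absurd h hq⟩⟩

end Integral

/-- L¹ input control: the infimum is attained and every minimizer lies in the strip between
the consecutive order curves `a (j+1) ≤ v ≤ a j` (with `a 0 = +∞`, `a (K+1) = -∞`
understood as absence of the corresponding bound). -/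
theorem stmt_12 (T : ℝ) (hT : 0 < T) (K : ℕ) (t : Fin K → ℝ → ℝ)
    (ht : ∀ i, ContinuousOn (t i) (Set.Icc (-T) T))
    (a : ℕ → ℝ → ℝ)
    (hrearr : ∀ x ∈ Set.Icc (-T) T,
      Multiset.map (fun j => a j x) (Finset.Icc 1 K).val
        = Multiset.map (fun i : Fin K => t i x) Finset.univ.val)
    (hmono : ∀ j, 1 ≤ j → j < K → ∀ x ∈ Set.Icc (-T) T, a (j + 1) x ≤ a j x)
    (A : ℝ) (j : ℕ) (hjK : j ≤ K)
    (hA1 : ∀ _ : j < K, (∫ x in (-T)..T, a (j + 1) x) ≤ A)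
    (hA2 : ∀ _ : 1 ≤ j, A ≤ ∫ x in (-T)..T, a j x) :
    (∃ v : ℝ → ℝ, ContinuousOn v (Set.Icc (-T) T) ∧ (∫ x in (-T)..T, v x) = A ∧
      ∀ w : ℝ → ℝ, ContinuousOn w (Set.Icc (-T) T) → (∫ x in (-T)..T, w x) = A →
        (∫ x in (-T)..T, ∑ i, |t i x - v x|) ≤ ∫ x in (-T)..T, ∑ i, |t i x - w x|) ∧
    (∀ v : ℝ → ℝ, ContinuousOn v (Set.Icc (-T) T) → (∫ x in (-T)..T, v x) = A →
      (∀ w : ℝ → ℝ, ContinuousOn w (Set.Icc (-T) T) → (∫ x in (-T)..T, w x) = A →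
        (∫ x in (-T)..T, ∑ i, |t i x - v x|) ≤ ∫ x in (-T)..T, ∑ i, |t i x - w x|) →
      ∀ x ∈ Set.Icc (-T) T,
        (∀ _ : j < K, a (j + 1) x ≤ v x) ∧ (∀ _ : 1 ≤ j, v x ≤ a j x)) := by
  have hTT : -T < T := by linarith
  have hrear : ∀ x ∈ Set.Icc (-T) T, IsDecreasingRearrangement (t · x) (a · x) := fun x hx =>
    .of_succ_le (hrearr x hx) fun k hk hkK => hmono k hk hkK x hx
  have hcost : ∀ w, ContinuousOn w (Set.Icc (-T) T) →
      ContinuousOn (fun x => ∑ i, |t i x - w x|) (Set.Icc (-T) T) := fun w hw => by fun_prop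
  obtain ⟨vs, hvs, hvsA, hvs_strip⟩ := exists_continuousOn_integral_eq_between hTT
    (fun h => IsDecreasingRearrangement.continuousOn ht hrear (by omega) h)
    (fun h => IsDecreasingRearrangement.continuousOn ht hrear h hjK)
    (fun h₁ h₂ x hx => hmono j h₂ h₁ x hx) hA1 hA2
  have hvs_min : ∀ x ∈ Set.Icc (-T) T, ∀ y, penalizedDeviation (t · x) j (vs x)
      ≤ penalizedDeviation (t · x) j y := fun x hx =>
    (hrear x hx).penalizedDeviation_le hjK (hvs_strip x hx).1 (hvs_strip x hx).2
  refine ⟨⟨vs, hvs, hvsA, fun w hw hwA => integral_le_integral_of_add_const_mul_le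
    (c := 2 * j - Fintype.card (Fin K)) hTT.le (hcost vs hvs) (hcost w hw) hvs hw
    (hvsA.trans hwA.symm) fun x hx => hvs_min x hx (w x)⟩, ?_⟩
  intro v hv hvA hvmin x hx
  have hv_le : penalizedDeviation (t · x) j (v x) ≤ penalizedDeviation (t · x) j (vs x) :=
    (add_const_mul_eq_of_integral_le (c := 2 * j - Fintype.card (Fin K)) hTT (hcost vs hvs)
      (hcost v hv) hvs hv (hvsA.trans hvA.symm) (fun x hx => hvs_min x hx (v x))
      (hvmin vs hvs hvsA) x hx).ge
  refine ⟨fun hj => ?_, fun hj => ?_⟩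
  · by_contra! hlt
    exact ((hrear x hx).penalizedDeviation_lt_of_gt hj hlt).not_ge (hv_le.trans (hvs_min x hx _))
  · by_contra! hlt
    exact ((hrear x hx).penalizedDeviation_lt_of_lt hj hjK hlt).not_ge
      (hv_le.trans (hvs_min x hx _))
end

section
/- Let f₀ be smooth and F: ℝ → ℝ satisfy F(x+2T) = F(x) − f_T(x+T) + f₀(x+2T) and F(x−2T) = F(x) + f_T(x−T) − f₀(x). Then u(t,x) := F(x−t) − F(x+t) + f₀(x+t) satisfies u(0,x) = f₀(x) and u(T,x) = f_T(x) for all x, and if F is C², u solves u_tt = u_xx. -/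
private lemma hd_sub (x t : ℝ) : HasDerivAt (fun s : ℝ => x - s) (-1) t := by
  simpa using (hasDerivAt_id t).const_sub x

private lemma hd_add (x t : ℝ) : HasDerivAt (fun s : ℝ => x + s) 1 t := by
  simpa using (hasDerivAt_id t).const_add x

private lemma hd_sub' (x t : ℝ) : HasDerivAt (fun y : ℝ => y - x) 1 t := by
  simpa using (hasDerivAt_id t).sub_const x

private lemma keyT (φ ψ χ : ℝ → ℝ) (hφ : Differentiable ℝ φ) (hψ : Differentiable ℝ ψ)
    (hχ : Differentiable ℝ χ) (x : ℝ) :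
    deriv (fun s : ℝ => φ (x - s) - ψ (x + s) + χ (x + s))
      = fun s : ℝ => -(deriv φ (x - s)) - deriv ψ (x + s) + deriv χ (x + s) := by
  funext t
  have h1 : HasDerivAt (fun s : ℝ => φ (x - s)) (deriv φ (x - t) * (-1)) t :=
    ((hφ (x - t)).hasDerivAt.comp t (hd_sub x t))
  have h2 : HasDerivAt (fun s : ℝ => ψ (x + s)) (deriv ψ (x + t) * 1) t :=
    ((hψ (x + t)).hasDerivAt.comp t (hd_add x t))
  have h3 : HasDerivAt (fun s : ℝ => χ (x + s)) (deriv χ (x + t) * 1) t :=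
    ((hχ (x + t)).hasDerivAt.comp t (hd_add x t))
  have := ((h1.sub h2).add h3).deriv
  exact this.trans (by ring)

private lemma keyX (φ ψ χ : ℝ → ℝ) (hφ : Differentiable ℝ φ) (hψ : Differentiable ℝ ψ)
    (hχ : Differentiable ℝ χ) (t : ℝ) :
    deriv (fun y : ℝ => φ (y - t) - ψ (y + t) + χ (y + t))
      = fun y : ℝ => deriv φ (y - t) - deriv ψ (y + t) + deriv χ (y + t) := by
  funext x
  have h1 : HasDerivAt (fun y : ℝ => φ (y - t)) (deriv φ (x - t) * 1) x :=
    ((hφ (x - t)).hasDerivAt.comp x (hd_sub' t x))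
  have h2 : HasDerivAt (fun y : ℝ => ψ (y + t)) (deriv ψ (x + t) * 1) x :=
    ((hψ (x + t)).hasDerivAt.comp x (by simpa using (hasDerivAt_id x).add_const t))
  have h3 : HasDerivAt (fun y : ℝ => χ (y + t)) (deriv χ (x + t) * 1) x :=
    ((hχ (x + t)).hasDerivAt.comp x (by simpa using (hasDerivAt_id x).add_const t))
  have := ((h1.sub h2).add h3).deriv
  exact this.trans (by ring)

theorem stmt_18 (f0 fT F : ℝ → ℝ) (T : ℝ) (hT : 0 < T)
    (hf0 : ContDiff ℝ (⊤ : ℕ∞) f0)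
    (hrec1 : ∀ x : ℝ, F (x + 2 * T) = F x - fT (x + T) + f0 (x + 2 * T))
    (hrec2 : ∀ x : ℝ, F (x - 2 * T) = F x + fT (x - T) - f0 x) :
    (∀ x : ℝ, F (x - 0) - F (x + 0) + f0 (x + 0) = f0 x) ∧
    (∀ x : ℝ, F (x - T) - F (x + T) + f0 (x + T) = fT x) ∧
    (ContDiff ℝ 2 F →
      ∀ t x : ℝ,
        deriv (deriv (fun s : ℝ => F (x - s) - F (x + s) + f0 (x + s))) t
          = deriv (deriv (fun y : ℝ => F (y - t) - F (y + t) + f0 (y + t))) x) := by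
  refine ⟨fun x => by simp, fun x => ?_, ?_⟩
  · have := hrec1 (x - T)
    have e1 : x - T + 2 * T = x + T := by ring
    have e2 : x - T + T = x := by ring
    rw [e1, e2] at this
    linarith
  · intro hF t x
    have hF2 : ContDiff ℝ ((1 : WithTop ℕ∞) + 1) F := by
      have h12 : ((1 : WithTop ℕ∞) + 1) = (2 : WithTop ℕ∞) := by norm_num
      rw [h12]; exact hF
    rw [contDiff_succ_iff_deriv] at hF2
    have hFd : Differentiable ℝ F := hF2.1
    have hFd' : Differentiable ℝ (deriv F) := hF2.2.2.differentiable one_ne_zero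
    have hf0' : ContDiff ℝ ((⊤ : ℕ∞) : WithTop ℕ∞) f0 := hf0.of_le (by simp)
    have hf0d : Differentiable ℝ f0 := hf0'.differentiable (by simp)
    have hf0d' : Differentiable ℝ (deriv f0) :=
      ((contDiff_infty_iff_deriv.mp hf0').2).differentiable (by simp)
    rw [keyT F F f0 hFd hFd hf0d x, keyX F F f0 hFd hFd hf0d t]
    have eT : (fun s : ℝ => -(deriv F (x - s)) - deriv F (x + s) + deriv f0 (x + s))
        = fun s : ℝ => (fun z => -(deriv F z)) (x - s) - deriv F (x + s) + deriv f0 (x + s) := rfl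
    rw [eT, keyT (fun z => -(deriv F z)) (deriv F) (deriv f0) hFd'.neg hFd' hf0d' x,
      keyX (deriv F) (deriv F) (deriv f0) hFd' hFd' hf0d' t]
    have hneg : deriv (fun z : ℝ => -(deriv F z)) = fun z => -(deriv (deriv F) z) := by
      funext z; simp [deriv.neg]
    simp only [hneg, neg_neg]
end
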